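/- arXiv:2203.12777 — 12 statements merged into one kernel-verified Lean document; each statement's English description precedes it below -/
import Mathlib

section
/- Let R and Q be probability measures on X, let θ ≥ 0, and let 𝒫 = {P probability measure on X : ‖μ_P − μ_Q‖_H ≤ θ} be the MMD uncertainty set centered at Q. If ‖μ_R − μ_Q‖_H > θ, then inf over P ∈ 𝒫 of ‖μ_R − μ_P‖_H equals ‖μ_R − μ_Q‖_H − θ, and this infimum is attained by the mixture P = λ·R + (1−λ)·Q with λ = θ/‖μ_R − μ_Q‖_H. If ‖μ_R − μ_Q‖_H ≤ θ, then the infimum equals 0. -/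
open MeasureTheory
open scoped ENNReal

/-- Projection onto an MMD uncertainty set: if `‖μ_R − μ_Q‖ > θ` then the closest MMD
distance from `R` to the set `𝒰 = {P : ‖μ_P − μ_Q‖ ≤ θ}` is `‖μ_R − μ_Q‖ − θ`, attained at
the mixture `λR + (1−λ)Q` with `λ = θ/‖μ_R − μ_Q‖`; if `‖μ_R − μ_Q‖ ≤ θ` the distance is `0`. -/
theorem stmt1
    {X H : Type*} [MeasurableSpace X]
    [NormedAddCommGroup H] [InnerProductSpace ℝ H] [CompleteSpace H]
    (Φ : X → H) (hΦm : StronglyMeasurable Φ) (C : ℝ) (hΦb : ∀ x, ‖Φ x‖ ≤ C)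
    (R Q : Measure X) [IsProbabilityMeasure R] [IsProbabilityMeasure Q]
    (θ : ℝ) (hθ : 0 ≤ θ) :
    let μemb : Measure X → H := fun P => ∫ x, Φ x ∂P
    let 𝒰 : Set (Measure X) := {P | IsProbabilityMeasure P ∧ ‖μemb P - μemb Q‖ ≤ θ}
    (θ < ‖μemb R - μemb Q‖ →
      (⨅ P : ↥𝒰, ‖μemb R - μemb (P : Measure X)‖) = ‖μemb R - μemb Q‖ - θ ∧
      (ENNReal.ofReal (θ / ‖μemb R - μemb Q‖) • R
          + ENNReal.ofReal (1 - θ / ‖μemb R - μemb Q‖) • Q) ∈ 𝒰 ∧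
      ‖μemb R - μemb (ENNReal.ofReal (θ / ‖μemb R - μemb Q‖) • R
          + ENNReal.ofReal (1 - θ / ‖μemb R - μemb Q‖) • Q)‖ = ‖μemb R - μemb Q‖ - θ) ∧
    (‖μemb R - μemb Q‖ ≤ θ →
      (⨅ P : ↥𝒰, ‖μemb R - μemb (P : Measure X)‖) = 0) := by
  intro μemb 𝒰
  have hI : ∀ (P : Measure X), IsFiniteMeasure P → Integrable Φ P := by
    intro P hP
    exact Integrable.mono' (integrable_const C) hΦm.aestronglyMeasurable
      (Filter.Eventually.of_forall hΦb)
  set N : ℝ := ‖μemb R - μemb Q‖ with hN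
  -- bounded below
  have hbdd : BddBelow (Set.range fun P : ↥𝒰 => ‖μemb R - μemb (P : Measure X)‖) :=
    ⟨0, by rintro x ⟨P, rfl⟩; exact norm_nonneg _⟩
  -- lower bound for members
  have hlow : ∀ P : Measure X, P ∈ 𝒰 → N - θ ≤ ‖μemb R - μemb P‖ := by
    intro P hP
    have htri : N ≤ ‖μemb R - μemb P‖ + ‖μemb P - μemb Q‖ := norm_sub_le_norm_sub_add_norm_sub _ _ _
    linarith [hP.2]
  constructor
  · intro hlt
    have hN0 : 0 < N := lt_of_le_of_lt hθ hlt
    set l : ℝ := θ / N with hl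
    have hl0 : 0 ≤ l := div_nonneg hθ hN0.le
    have hl1 : l ≤ 1 := by rw [hl, div_le_one hN0]; exact hlt.le
    have h1l : 0 ≤ 1 - l := by linarith
    set Ps : Measure X := ENNReal.ofReal l • R + ENNReal.ofReal (1 - l) • Q with hPs
    have hPsProb : IsProbabilityMeasure Ps := by
      constructor
      simp only [hPs, Measure.add_apply, Measure.smul_apply, measure_univ, smul_eq_mul, mul_one]
      rw [← ENNReal.ofReal_add hl0 h1l]
      norm_num
    haveI := hPsProb
    have hPsFin : IsFiniteMeasure Ps := inferInstance
    have hμPs : μemb Ps = l • μemb R + (1 - l) • μemb Q := by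
      have h1 : Integrable Φ (ENNReal.ofReal l • R) :=
        (hI R inferInstance).smul_measure ENNReal.ofReal_ne_top
      have h2 : Integrable Φ (ENNReal.ofReal (1 - l) • Q) :=
        (hI Q inferInstance).smul_measure ENNReal.ofReal_ne_top
      simp only [μemb, hPs]
      rw [integral_add_measure h1 h2, integral_smul_measure, integral_smul_measure,
        ENNReal.toReal_ofReal hl0, ENNReal.toReal_ofReal h1l]
    have hdiff1 : μemb R - μemb Ps = (1 - l) • (μemb R - μemb Q) := by
      rw [hμPs]; module
    have hdiff2 : μemb Ps - μemb Q = l • (μemb R - μemb Q) := by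
      rw [hμPs]; module
    have hlN : l * N = θ := div_mul_cancel₀ θ hN0.ne'
    have hnorm1 : ‖μemb R - μemb Ps‖ = N - θ := by
      rw [hdiff1, norm_smul, Real.norm_eq_abs, abs_of_nonneg h1l, ← hN, sub_mul, one_mul, hlN]
    have hmem : Ps ∈ 𝒰 := by
      refine ⟨hPsProb, ?_⟩
      rw [hdiff2, norm_smul, Real.norm_eq_abs, abs_of_nonneg hl0, ← hN, hlN]
    haveI : Nonempty ↥𝒰 := ⟨⟨Ps, hmem⟩⟩
    refine ⟨?_, hmem, hnorm1⟩
    refine le_antisymm ?_ ?_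
    · calc (⨅ P : ↥𝒰, ‖μemb R - μemb (P : Measure X)‖)
          ≤ ‖μemb R - μemb Ps‖ := ciInf_le hbdd (⟨Ps, hmem⟩ : ↥𝒰)
        _ = N - θ := hnorm1
    · exact le_ciInf fun P => hlow P P.2
  · intro hle
    have hRmem : R ∈ 𝒰 := ⟨inferInstance, hle⟩
    haveI : Nonempty ↥𝒰 := ⟨⟨R, hRmem⟩⟩
    refine le_antisymm ?_ (le_ciInf fun P => norm_nonneg _)
    calc (⨅ P : ↥𝒰, ‖μemb R - μemb (P : Measure X)‖)
        ≤ ‖μemb R - μemb R‖ := ciInf_le hbdd (⟨R, hRmem⟩ : ↥𝒰)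
      _ = 0 := by simp
end

section
/- Let Q₀ and Q₁ be probability measures on X, let θ > 0 satisfy 2θ < ‖μ_{Q₀} − μ_{Q₁}‖_H, let 𝒫₀ and 𝒫₁ be the MMD uncertainty sets of radius θ centered at Q₀ and Q₁ respectively, and let γ ∈ (−‖μ_{Q₀} − μ_{Q₁}‖_H + 2θ, ‖μ_{Q₀} − μ_{Q₁}‖_H − 2θ). Then for every probability measure R on X: (inf over P ∈ 𝒫₀ of ‖μ_R − μ_P‖_H) − (inf over P ∈ 𝒫₁ of ‖μ_R − μ_P‖_H) ≥ γ if and only if ‖μ_R − μ_{Q₀}‖_H − ‖μ_R − μ_{Q₁}‖_H ≥ γ. -/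
/-!
The distance from `μ_R` to the embeddings of the ball `𝒫` around `Q` is `max (‖μ_R - μ_Q‖ - θ) 0`:
the triangle inequality bounds it below, and the bound is attained on the segment from `μ_Q` to
`μ_R`, which consists of embeddings because a mixture of probability measures embeds to the
corresponding convex combination. With `dᵢ = ‖μ_R - μ_{Qᵢ}‖` and `D = ‖μ_{Q₀} - μ_{Q₁}‖ ≤ d₀ + d₁`,
the condition `|γ| < D - 2θ` makes the clipping at `0` irrelevant: if, say, `d₁ < θ` then
`d₀ - θ > D - 2θ > γ`, and also `d₀ - d₁ > γ`, so both sides of the equivalence hold.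
-/

open MeasureTheory Set

lemma convex_integral_image_isProbabilityMeasure {X E : Type*} [MeasurableSpace X]
    [NormedAddCommGroup E] [NormedSpace ℝ E] {f : X → E}
    (hf : ∀ P : Measure X, IsProbabilityMeasure P → Integrable f P) :
    Convex ℝ ((fun P : Measure X => ∫ x, f x ∂P) '' {P | IsProbabilityMeasure P}) := by
  rintro _ ⟨Q, hQ, rfl⟩ _ ⟨R, hR, rfl⟩ a b ha hb hab
  refine ⟨ENNReal.ofReal a • Q + ENNReal.ofReal b • R, ⟨?_⟩, ?_⟩
  · simp only [Measure.add_apply, Measure.smul_apply, smul_eq_mul, hQ.measure_univ,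
      hR.measure_univ, mul_one]
    rw [← ENNReal.ofReal_add ha hb, hab, ENNReal.ofReal_one]
  · dsimp only
    rw [integral_add_measure ((hf Q hQ).smul_measure ENNReal.ofReal_ne_top)
        ((hf R hR).smul_measure ENNReal.ofReal_ne_top), integral_smul_measure,
      integral_smul_measure, ENNReal.toReal_ofReal ha, ENNReal.toReal_ofReal hb]

lemma exists_mem_segment_norm_sub_le {E : Type*} [NormedAddCommGroup E] [NormedSpace ℝ E]
    (q r : E) {θ : ℝ} (hθ : 0 ≤ θ) :
    ∃ p ∈ segment ℝ q r, ‖p - q‖ ≤ θ ∧ ‖r - p‖ ≤ max (‖r - q‖ - θ) 0 := by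
  rcases le_or_gt ‖r - q‖ θ with hle | hlt
  · exact ⟨r, right_mem_segment ℝ q r, hle, by simp⟩
  · have hd : 0 < ‖r - q‖ := hθ.trans_lt hlt
    set t := θ / ‖r - q‖
    have ht : t ∈ Icc (0 : ℝ) 1 := ⟨by positivity, (div_le_one hd).2 hlt.le⟩
    refine ⟨AffineMap.lineMap q r t, lineMap_mem_segment ℝ q r ht, ?_, ?_⟩
    · rw [← dist_eq_norm, dist_lineMap_left, dist_eq_norm', Real.norm_of_nonneg ht.1,
        div_mul_cancel₀ _ hd.ne']
    · rw [← dist_eq_norm', dist_lineMap_right, dist_eq_norm',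
        Real.norm_of_nonneg (by linarith [ht.2]), sub_mul, div_mul_cancel₀ _ hd.ne', one_mul]
      exact le_max_left _ _

lemma iInf_norm_sub_eq_max {ι E : Type*} [NormedAddCommGroup E] [NormedSpace ℝ E]
    (s : Set ι) (f : ι → E) {q r : E} (hqr : segment ℝ q r ⊆ f '' s) {θ : ℝ} (hθ : 0 ≤ θ) :
    ⨅ i : ↥{i | i ∈ s ∧ ‖f i - q‖ ≤ θ}, ‖r - f i‖ = max (‖r - q‖ - θ) 0 := by
  have hbdd : BddBelow (range fun i : ↥{i | i ∈ s ∧ ‖f i - q‖ ≤ θ} => ‖r - f i‖) :=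
    ⟨0, by rintro _ ⟨i, rfl⟩; exact norm_nonneg _⟩
  obtain ⟨p, hp, hpq, hrp⟩ := exists_mem_segment_norm_sub_le q r hθ
  obtain ⟨i, hi, rfl⟩ := hqr hp
  obtain ⟨j, hj, hjq⟩ := hqr (left_mem_segment ℝ q r)
  have : Nonempty ↥{i | i ∈ s ∧ ‖f i - q‖ ≤ θ} := ⟨⟨j, hj, by simp [hjq, hθ]⟩⟩
  refine le_antisymm ((ciInf_le hbdd ⟨i, hi, hpq⟩).trans hrp) (le_ciInf ?_)
  rintro ⟨k, -, hk⟩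
  refine max_le ?_ (norm_nonneg _)
  linarith [norm_sub_le_norm_sub_add_norm_sub r (f k) q]

lemma le_max_sub_max_iff {d₀ d₁ D θ γ : ℝ} (hD : D ≤ d₀ + d₁)
    (hγl : -D + 2 * θ < γ) (hγr : γ < D - 2 * θ) :
    γ ≤ max (d₀ - θ) 0 - max (d₁ - θ) 0 ↔ γ ≤ d₀ - d₁ := by
  rcases le_or_gt θ d₀ with h₀ | h₀ <;> rcases le_or_gt θ d₁ with h₁ | h₁
  · rw [max_eq_left (by linarith), max_eq_left (by linarith), sub_sub_sub_cancel_right]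
  · rw [max_eq_left (by linarith), max_eq_right (by linarith)]
    constructor <;> intro <;> linarith
  · rw [max_eq_right (by linarith), max_eq_left (by linarith)]
    constructor <;> intro <;> linarith
  · linarith

theorem stmt2_general
    {X H : Type*} [MeasurableSpace X]
    [NormedAddCommGroup H] [InnerProductSpace ℝ H]
    (Φ : X → H) (hΦm : StronglyMeasurable Φ) (C : ℝ) (hΦb : ∀ x, ‖Φ x‖ ≤ C)
    (Q₀ Q₁ : Measure X) [IsProbabilityMeasure Q₀] [IsProbabilityMeasure Q₁]
    (θ : ℝ) (hθ : 0 < θ) :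
    let μemb : Measure X → H := fun P => ∫ x, Φ x ∂P
    let 𝒫₀ : Set (Measure X) := {P | IsProbabilityMeasure P ∧ ‖μemb P - μemb Q₀‖ ≤ θ}
    let 𝒫₁ : Set (Measure X) := {P | IsProbabilityMeasure P ∧ ‖μemb P - μemb Q₁‖ ≤ θ}
    2 * θ < ‖μemb Q₀ - μemb Q₁‖ →
    ∀ γ : ℝ, γ ∈ Set.Ioo (-‖μemb Q₀ - μemb Q₁‖ + 2 * θ) (‖μemb Q₀ - μemb Q₁‖ - 2 * θ) →
    ∀ R : Measure X, IsProbabilityMeasure R →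
      (γ ≤ (⨅ P : ↥𝒫₀, ‖μemb R - μemb (P : Measure X)‖)
            - (⨅ P : ↥𝒫₁, ‖μemb R - μemb (P : Measure X)‖)
        ↔ γ ≤ ‖μemb R - μemb Q₀‖ - ‖μemb R - μemb Q₁‖) := by
  intro μemb 𝒫₀ 𝒫₁ _ γ hγ R hR
  have hconv := convex_integral_image_isProbabilityMeasure fun P _ =>
    Integrable.of_bound hΦm.aestronglyMeasurable C (.of_forall hΦb)
  have hinf (Q : Measure X) (hQ : IsProbabilityMeasure Q) :
      ⨅ P : ↥{P | IsProbabilityMeasure P ∧ ‖μemb P - μemb Q‖ ≤ θ}, ‖μemb R - μemb P‖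
        = max (‖μemb R - μemb Q‖ - θ) 0 :=
    iInf_norm_sub_eq_max _ μemb
      (hconv.segment_subset (mem_image_of_mem _ hQ) (mem_image_of_mem _ hR)) hθ.le
  rw [hinf Q₀ ‹_›, hinf Q₁ ‹_›]
  refine le_max_sub_max_iff ?_ hγ.1 hγ.2
  simpa only [dist_eq_norm] using dist_triangle_left (μemb Q₀) (μemb Q₁) (μemb R)

/-- Equivalence of the robust kernel test statistic and the direct MMD comparison:
for `γ` in the stated interval, `(inf_{P∈𝒫₀}‖μ_R−μ_P‖) − (inf_{P∈𝒫₁}‖μ_R−μ_P‖) ≥ γ` iff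
`‖μ_R−μ_{Q₀}‖ − ‖μ_R−μ_{Q₁}‖ ≥ γ`. -/
theorem stmt2
    {X H : Type*} [MeasurableSpace X]
    [NormedAddCommGroup H] [InnerProductSpace ℝ H] [CompleteSpace H]
    (Φ : X → H) (hΦm : StronglyMeasurable Φ) (C : ℝ) (hΦb : ∀ x, ‖Φ x‖ ≤ C)
    (Q₀ Q₁ : Measure X) [IsProbabilityMeasure Q₀] [IsProbabilityMeasure Q₁]
    (θ : ℝ) (hθ : 0 < θ) :
    let μemb : Measure X → H := fun P => ∫ x, Φ x ∂P
    let 𝒫₀ : Set (Measure X) := {P | IsProbabilityMeasure P ∧ ‖μemb P - μemb Q₀‖ ≤ θ}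
    let 𝒫₁ : Set (Measure X) := {P | IsProbabilityMeasure P ∧ ‖μemb P - μemb Q₁‖ ≤ θ}
    2 * θ < ‖μemb Q₀ - μemb Q₁‖ →
    ∀ γ : ℝ, γ ∈ Set.Ioo (-‖μemb Q₀ - μemb Q₁‖ + 2 * θ) (‖μemb Q₀ - μemb Q₁‖ - 2 * θ) →
    ∀ R : Measure X, IsProbabilityMeasure R →
      (γ ≤ (⨅ P : ↥𝒫₀, ‖μemb R - μemb (P : Measure X)‖)
            - (⨅ P : ↥𝒫₁, ‖μemb R - μemb (P : Measure X)‖)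
        ↔ γ ≤ ‖μemb R - μemb Q₀‖ - ‖μemb R - μemb Q₁‖) :=
  stmt2_general Φ hΦm C hΦb Q₀ Q₁ θ hθ
end

section
/- Assume additionally the kernel bound 0 ≤ ⟨Φ(x),Φ(y)⟩ ≤ K for all x, y ∈ X. Let Q₀ and Q₁ be probability measures on X with D := ‖μ_{Q₁} − μ_{Q₀}‖_H, let θ ≥ 0 with 2θ ≤ D, and let 𝒫₀, 𝒫₁ be the MMD uncertainty sets of radius θ centered at Q₀, Q₁. For n i.i.d. samples x₁,…,xₙ and empirical embedding μ̂ₙ = (1/n)∑ᵢ Φ(xᵢ), the following hold: (i) for every P₀ ∈ 𝒫₀, the P₀^{⊗n}-probability of the event ‖μ̂ₙ − μ_{Q₀}‖_H ≥ ‖μ̂ₙ − μ_{Q₁}‖_H is at most exp(−n(D² − 2θD)²/(8K²)); (ii) for every P₁ ∈ 𝒫₁, the P₁^{⊗n}-probability of the event ‖μ̂ₙ − μ_{Q₀}‖_H < ‖μ̂ₙ − μ_{Q₁}‖_H is at most exp(−n(D² − 2θD)²/(8K²)). -/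
/-! With `Δ = μ_{Q₁} - μ_{Q₀}`, the sample is closer to `μ_{Q₁}` exactly when
`⟪Δ, μ̂ₙ⟫ ≥ (‖μ_{Q₁}‖² - ‖μ_{Q₀}‖²) / 2`, so an error of the test is a deviation of the average
of the i.i.d. variables `⟪Δ, Φ xᵢ⟫ ∈ [-K, K]` from its mean. Under `P₀` this mean falls short of the
threshold by at least `(D² - 2θD) / 2` (Cauchy–Schwarz against `‖μ_{P₀} - μ_{Q₀}‖ ≤ θ`), and
Hoeffding's inequality bounds the deviation probability. Part (ii) is part (i) with `Q₀` and `Q₁`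
swapped. -/

open MeasureTheory ProbabilityTheory Set Real
open scoped InnerProductSpace

theorem measureReal_pi_sum_sub_integral_ge_le {Ω ι : Type*} [MeasurableSpace Ω] [Fintype ι]
    (P : Measure Ω) [IsProbabilityMeasure P]
    {f : Ω → ℝ} (hf : AEMeasurable f P) {a b : ℝ} (hab : ∀ᵐ x ∂P, f x ∈ Icc a b)
    {ε : ℝ} (hε : 0 ≤ ε) :
    (Measure.pi fun _ : ι => P).real {xs | ε ≤ ∑ i, (f (xs i) - ∫ x, f x ∂P)}
      ≤ exp (-ε ^ 2 / (2 * (Fintype.card ι * ((b - a) / 2) ^ 2))) := by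
  have hsubG : HasSubgaussianMGF (fun x => f x - ∫ x, f x ∂P) ((‖b - a‖₊ / 2) ^ 2) P :=
    hasSubgaussianMGF_of_mem_Icc hf hab
  have hind := iIndepFun_pi (μ := fun _ : ι => P) (X := fun _ x => f x - ∫ x, f x ∂P)
    fun _ => hf.sub_const _
  have hsubG_pi (i : ι) : HasSubgaussianMGF (fun xs : ι → Ω => f (xs i) - ∫ x, f x ∂P)
      ((‖b - a‖₊ / 2) ^ 2) (Measure.pi fun _ => P) :=
    .of_map (Y := Function.eval i) (measurable_pi_apply i).aemeasurable <| by
      rwa [(measurePreserving_eval (fun _ : ι => P) i).map_eq]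
  convert HasSubgaussianMGF.measure_sum_ge_le_of_iIndepFun hind (s := Finset.univ)
    (fun i _ => hsubG_pi i) hε using 4
  simp [div_pow, sq_abs]

section InnerProductSpace

variable {E : Type*} [NormedAddCommGroup E] [InnerProductSpace ℝ E]

theorem norm_sub_le_norm_sub_iff_inner (a b x : E) :
    ‖x - b‖ ≤ ‖x - a‖ ↔ (‖b‖ ^ 2 - ‖a‖ ^ 2) / 2 ≤ ⟪b - a, x⟫_ℝ := by
  rw [← pow_le_pow_iff_left₀ (norm_nonneg _) (norm_nonneg _) two_ne_zero,
    norm_sub_sq_real, norm_sub_sq_real, inner_sub_left, real_inner_comm x a,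
    real_inner_comm x b]
  constructor <;> intro h <;> linarith

theorem sq_norm_sub_div_two_sub_mul_le {a b p : E} {θ : ℝ} (hp : ‖p - a‖ ≤ θ) :
    ‖b - a‖ ^ 2 / 2 - θ * ‖b - a‖ ≤ (‖b‖ ^ 2 - ‖a‖ ^ 2) / 2 - ⟪b - a, p⟫_ℝ := by
  have hinner : ⟪b - a, p - a⟫_ℝ ≤ θ * ‖b - a‖ :=
    (real_inner_le_norm _ _).trans <| by
      rw [mul_comm]; exact mul_le_mul_of_nonneg_right hp (norm_nonneg _)
  rw [inner_sub_right, inner_sub_left, inner_sub_left, real_inner_self_eq_norm_sq] at hinner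
  rw [norm_sub_sq_real, inner_sub_left]
  linarith

end InnerProductSpace

section KernelMeanEmbedding

variable {X H : Type*} [MeasurableSpace X] [NormedAddCommGroup H] [InnerProductSpace ℝ H]

noncomputable def kernelMeanEmbedding (Φ : X → H) (P : Measure X) : H := ∫ x, Φ x ∂P

noncomputable def empiricalEmbedding (Φ : X → H) {n : ℕ} (xs : Fin n → X) : H :=
  (n : ℝ)⁻¹ • ∑ i, Φ (xs i)

theorem integrable_of_inner_self_le {Φ : X → H} (hΦm : StronglyMeasurable Φ) {K : ℝ}
    (hK : ∀ x, ⟪Φ x, Φ x⟫_ℝ ≤ K) (P : Measure X) [IsFiniteMeasure P] : Integrable Φ P :=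
  .of_bound hΦm.aestronglyMeasurable √K <| .of_forall fun x =>
    (le_abs_self _).trans <| Real.abs_le_sqrt <| by rw [← real_inner_self_eq_norm_sq]; exact hK x

variable [CompleteSpace H]

theorem inner_kernelMeanEmbedding_mem_Icc {Φ : X → H} (hΦm : StronglyMeasurable Φ) {K : ℝ}
    (hker : ∀ x y, 0 ≤ ⟪Φ x, Φ y⟫_ℝ ∧ ⟪Φ x, Φ y⟫_ℝ ≤ K) (P : Measure X) [IsProbabilityMeasure P]
    (x : X) : ⟪Φ x, kernelMeanEmbedding Φ P⟫_ℝ ∈ Icc 0 K := by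
  have hΦi := integrable_of_inner_self_le hΦm (fun y => (hker y y).2) P
  rw [kernelMeanEmbedding, ← integral_inner hΦi]
  refine ⟨integral_nonneg fun y => (hker x y).1, ?_⟩
  simpa using integral_mono (hΦi.const_inner (Φ x)) (integrable_const K) fun y => (hker x y).2

theorem measure_pi_norm_empiricalEmbedding_sub_le_le {Φ : X → H} (hΦm : StronglyMeasurable Φ)
    {K : ℝ} (hker : ∀ x y, 0 ≤ ⟪Φ x, Φ y⟫_ℝ ∧ ⟪Φ x, Φ y⟫_ℝ ≤ K)
    (Q₀ Q₁ P : Measure X) [IsProbabilityMeasure Q₀] [IsProbabilityMeasure Q₁]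
    [IsProbabilityMeasure P] {θ : ℝ}
    (hD : 2 * θ ≤ ‖kernelMeanEmbedding Φ Q₁ - kernelMeanEmbedding Φ Q₀‖)
    (hP : ‖kernelMeanEmbedding Φ P - kernelMeanEmbedding Φ Q₀‖ ≤ θ) (n : ℕ) :
    (Measure.pi fun _ : Fin n => P)
        {xs | ‖empiricalEmbedding Φ xs - kernelMeanEmbedding Φ Q₁‖
          ≤ ‖empiricalEmbedding Φ xs - kernelMeanEmbedding Φ Q₀‖}
      ≤ ENNReal.ofReal (exp (-(n * (‖kernelMeanEmbedding Φ Q₁ - kernelMeanEmbedding Φ Q₀‖ ^ 2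
          - 2 * θ * ‖kernelMeanEmbedding Φ Q₁ - kernelMeanEmbedding Φ Q₀‖) ^ 2) / (8 * K ^ 2))) := by
  set μ₀ := kernelMeanEmbedding Φ Q₀
  set μ₁ := kernelMeanEmbedding Φ Q₁
  set D := ‖μ₁ - μ₀‖
  set g : X → ℝ := fun x => ⟪μ₁ - μ₀, Φ x⟫_ℝ
  set t := (D ^ 2 - 2 * θ * D) / 2 with ht_def
  have hg_mem (x : X) : g x ∈ Icc (-K) K := by
    obtain ⟨h₀, h₀'⟩ := inner_kernelMeanEmbedding_mem_Icc hΦm hker Q₀ x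
    obtain ⟨h₁, h₁'⟩ := inner_kernelMeanEmbedding_mem_Icc hΦm hker Q₁ x
    simp only [g, inner_sub_left, real_inner_comm (Φ x)] at h₀ h₀' h₁ h₁' ⊢
    constructor <;> linarith
  have hg_int : ∫ x, g x ∂P = ⟪μ₁ - μ₀, kernelMeanEmbedding Φ P⟫_ℝ :=
    integral_inner (integrable_of_inner_self_le hΦm (fun y => (hker y y).2) P) _
  have ht : 0 ≤ t := by
    rw [ht_def]; nlinarith [norm_nonneg (μ₁ - μ₀)]
  have hmargin : t ≤ (‖μ₁‖ ^ 2 - ‖μ₀‖ ^ 2) / 2 - ∫ x, g x ∂P := by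
    rw [hg_int, ht_def]
    linarith [sq_norm_sub_div_two_sub_mul_le (b := μ₁) hP]
  have hsubset : {xs : Fin n → X | ‖empiricalEmbedding Φ xs - μ₁‖ ≤ ‖empiricalEmbedding Φ xs - μ₀‖}
      ⊆ {xs | n * t ≤ ∑ i, (g (xs i) - ∫ x, g x ∂P)} := by
    intro xs hxs
    have hc := (norm_sub_le_norm_sub_iff_inner μ₀ μ₁ _).mp hxs
    rw [empiricalEmbedding, real_inner_smul_right, inner_sum] at hc
    have hsum : n * ((‖μ₁‖ ^ 2 - ‖μ₀‖ ^ 2) / 2) ≤ ∑ i, g (xs i) := by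
      rcases n.eq_zero_or_pos with rfl | hn
      · simp
      · exact (le_inv_mul_iff₀ (by exact_mod_cast hn)).mp hc
    simp only [mem_ofPred_eq, Finset.sum_sub_distrib, Finset.sum_const, Finset.card_univ,
      Fintype.card_fin, nsmul_eq_mul]
    nlinarith [Nat.cast_nonneg (α := ℝ) n]
  have hexp : -(n * t) ^ 2 / (2 * (Fintype.card (Fin n) * ((K - -K) / 2) ^ 2))
      = -(n * (D ^ 2 - 2 * θ * D) ^ 2) / (8 * K ^ 2) := by
    rcases eq_or_ne (n : ℝ) 0 with hn | hn
    · simp [hn]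
    · rw [Fintype.card_fin]; field_simp; ring
  calc _ ≤ (Measure.pi fun _ : Fin n => P) {xs | n * t ≤ ∑ i, (g (xs i) - ∫ x, g x ∂P)} :=
        measure_mono hsubset
    _ = ENNReal.ofReal ((Measure.pi fun _ : Fin n => P).real
          {xs | n * t ≤ ∑ i, (g (xs i) - ∫ x, g x ∂P)}) := (ofReal_measureReal).symm
    _ ≤ _ := by
      rw [← hexp]
      gcongr
      exact measureReal_pi_sum_sub_integral_ge_le P (by fun_prop) (.of_forall hg_mem)
        (by positivity)

end KernelMeanEmbedding

theorem stmt3_general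
    {X H : Type*} [MeasurableSpace X]
    [NormedAddCommGroup H] [InnerProductSpace ℝ H] [CompleteSpace H]
    (Φ : X → H) (hΦm : StronglyMeasurable Φ)
    (K : ℝ) (hker : ∀ x y : X, 0 ≤ ⟪Φ x, Φ y⟫_ℝ ∧ ⟪Φ x, Φ y⟫_ℝ ≤ K)
    (Q₀ Q₁ : Measure X) [IsProbabilityMeasure Q₀] [IsProbabilityMeasure Q₁]
    (θ : ℝ) :
    let μemb : Measure X → H := fun P => ∫ x, Φ x ∂P
    let emp : ∀ n : ℕ, (Fin n → X) → H := fun n xs => (n : ℝ)⁻¹ • ∑ i, Φ (xs i)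
    let D : ℝ := ‖μemb Q₁ - μemb Q₀‖
    2 * θ ≤ D →
    ∀ n : ℕ,
      (∀ P₀ : Measure X, IsProbabilityMeasure P₀ → ‖μemb P₀ - μemb Q₀‖ ≤ θ →
        (Measure.pi fun _ : Fin n => P₀)
            {xs | ‖emp n xs - μemb Q₁‖ ≤ ‖emp n xs - μemb Q₀‖}
          ≤ ENNReal.ofReal (Real.exp (-(n * (D ^ 2 - 2 * θ * D) ^ 2) / (8 * K ^ 2)))) ∧
      (∀ P₁ : Measure X, IsProbabilityMeasure P₁ → ‖μemb P₁ - μemb Q₁‖ ≤ θ →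
        (Measure.pi fun _ : Fin n => P₁)
            {xs | ‖emp n xs - μemb Q₀‖ < ‖emp n xs - μemb Q₁‖}
          ≤ ENNReal.ofReal (Real.exp (-(n * (D ^ 2 - 2 * θ * D) ^ 2) / (8 * K ^ 2)))) := by
  intro μemb emp D hD n
  refine ⟨fun P₀ _ hP₀ => measure_pi_norm_empiricalEmbedding_sub_le_le hΦm hker Q₀ Q₁ P₀ hD hP₀ n,
    fun P₁ _ hP₁ => ?_⟩
  have hD' : D = ‖μemb Q₀ - μemb Q₁‖ := norm_sub_rev _ _
  rw [hD'] at hD ⊢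
  refine (measure_mono ?_).trans
    (measure_pi_norm_empiricalEmbedding_sub_le_le hΦm hker Q₁ Q₀ P₁ hD hP₁ n)
  exact ofPred_subset_ofPred.mpr fun _ => le_of_lt

/-- Exponential bounds on the worst-case error probabilities of the direct robust kernel
test (with threshold `γ = 0`): under any `P₀ ∈ 𝒫₀` the probability of deciding `H₁`, and
under any `P₁ ∈ 𝒫₁` the probability of deciding `H₀`, are both at most
`exp(−n(D² − 2θD)²/(8K²))` where `D = ‖μ_{Q₁} − μ_{Q₀}‖`. -/
theorem stmt3
    {X H : Type*} [MeasurableSpace X]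
    [NormedAddCommGroup H] [InnerProductSpace ℝ H] [CompleteSpace H]
    (Φ : X → H) (hΦm : StronglyMeasurable Φ) (C : ℝ) (hΦb : ∀ x, ‖Φ x‖ ≤ C)
    (K : ℝ) (hker : ∀ x y : X, 0 ≤ ⟪Φ x, Φ y⟫_ℝ ∧ ⟪Φ x, Φ y⟫_ℝ ≤ K)
    (Q₀ Q₁ : Measure X) [IsProbabilityMeasure Q₀] [IsProbabilityMeasure Q₁]
    (θ : ℝ) (hθ : 0 ≤ θ) :
    let μemb : Measure X → H := fun P => ∫ x, Φ x ∂P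
    let emp : ∀ n : ℕ, (Fin n → X) → H := fun n xs => (n : ℝ)⁻¹ • ∑ i, Φ (xs i)
    let D : ℝ := ‖μemb Q₁ - μemb Q₀‖
    2 * θ ≤ D →
    ∀ n : ℕ,
      (∀ P₀ : Measure X, IsProbabilityMeasure P₀ → ‖μemb P₀ - μemb Q₀‖ ≤ θ →
        (Measure.pi fun _ : Fin n => P₀)
            {xs | ‖emp n xs - μemb Q₁‖ ≤ ‖emp n xs - μemb Q₀‖}
          ≤ ENNReal.ofReal (Real.exp (-(n * (D ^ 2 - 2 * θ * D) ^ 2) / (8 * K ^ 2)))) ∧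
      (∀ P₁ : Measure X, IsProbabilityMeasure P₁ → ‖μemb P₁ - μemb Q₁‖ ≤ θ →
        (Measure.pi fun _ : Fin n => P₁)
            {xs | ‖emp n xs - μemb Q₀‖ < ‖emp n xs - μemb Q₁‖}
          ≤ ENNReal.ofReal (Real.exp (-(n * (D ^ 2 - 2 * θ * D) ^ 2) / (8 * K ^ 2)))) :=
  stmt3_general Φ hΦm K hker Q₀ Q₁ θ
end

section
/- Let X be a measurable space, let 𝒫₀ and 𝒫₁ be nonempty sets of probability measures on X, and let α ∈ (0,1). Let (φₙ) be a sequence of measurable functions φₙ : Xⁿ → [0,1] satisfying, for every n, sup over P₀ ∈ 𝒫₀ of ∫ φₙ d(P₀^{⊗n}) ≤ α. Then inf over P₁ ∈ 𝒫₁ of limsup_{n→∞} −(1/n)·log ∫ (1−φₙ) d(P₁^{⊗n}) ≤ inf over (P₀,P₁) ∈ 𝒫₀ × 𝒫₁ of D(P₀‖P₁), where both sides are valued in [0,∞]. -/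
open MeasureTheory Filter
open scoped ENNReal

/- Kullback–Leibler divergence `D(P‖Q)`, valued in `[0,∞]`: it is
`∫ log(dP/dQ) dP` when `P ≪ Q` (and the integrand is `P`-integrable), and `∞` otherwise. -/
open scoped Classical in
noncomputable def klDiv {X : Type*} [MeasurableSpace X] (P Q : Measure X) : ℝ≥0∞ :=
  if P ≪ Q ∧ MeasureTheory.Integrable (fun x => Real.log (P.rnDeriv Q x).toReal) P
  then ENNReal.ofReal (∫ x, Real.log (P.rnDeriv Q x).toReal ∂P) else ⊤

/- `−(1/n)·log β`, valued in `[0,∞]`, with the convention that it is `∞` when `β = 0`. -/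
open scoped Classical in
noncomputable def negLogRate (n : ℕ) (β : ℝ) : ℝ≥0∞ :=
  if β = 0 then ⊤ else ENNReal.ofReal (-(1 / (n : ℝ)) * Real.log β)

/-! Fix `P₀ ∈ 𝒫₀`, `P₁ ∈ 𝒫₁` with `D(P₀‖P₁) = D < ∞` and let `Lₙ(x) = ∑ᵢ llr P₀ P₁ (xᵢ)` be the
log-likelihood ratio of `P₀^{⊗n}` against `P₁^{⊗n}`, whose density is `∏ᵢ dP₀/dP₁ (xᵢ)`.
Changing measure on the event `{Lₙ ≤ c}` gives
`1 - α - P₀^{⊗n}(Lₙ > c) ≤ exp c * ∫ (1 - φₙ) dP₁^{⊗n}`.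
For `c = n (D + ε)` the law of large numbers (Etemadi's strong law on the infinite product)
makes `P₀^{⊗n}(Lₙ > c) < (1 - α) / 2` eventually, so the miss probability is at least
`(1 - α) / 2 * exp (-n (D + ε))` and its exponent is at most `D + ε`. -/

open scoped Topology
open ProbabilityTheory

section ChangeOfMeasure

variable {Y : Type*} [MeasurableSpace Y]

theorem measureReal_le_mul_integral_add {P Q : Measure Y} [IsFiniteMeasure P]
    [IsFiniteMeasure Q] {L : Y → ℝ≥0∞} (hL : Measurable L) (hPQ : P = Q.withDensity L)
    {A : Set Y} (hA : MeasurableSet A) {t : ℝ} (ht : 0 ≤ t)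
    (hLA : ∀ᵐ y ∂Q, y ∈ A → L y ≤ ENNReal.ofReal t)
    {ψ : Y → ℝ} (hψm : Measurable ψ) (hψ : ∀ y, 0 ≤ ψ y ∧ ψ y ≤ 1) :
    P.real A ≤ t * ∫ y, (1 - ψ y) ∂Q + ∫ y, ψ y ∂P := by
  have hψint : ∀ (μ : Measure Y) [IsFiniteMeasure μ], Integrable ψ μ := fun μ _ =>
    .of_bound hψm.aestronglyMeasurable 1 (.of_forall fun y => by
      rw [Real.norm_eq_abs, abs_le]; constructor <;> linarith [hψ y])
  set g : Y → ℝ≥0∞ := fun y => ENNReal.ofReal (1 - ψ y)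
  have hg : Measurable g := (measurable_const.sub hψm).ennreal_ofReal
  have hsplit : ∀ y, g y + ENNReal.ofReal (ψ y) = 1 := fun y => by
    rw [← ENNReal.ofReal_add (by linarith [hψ y]) (hψ y).1]; simp
  have hdens : ∫⁻ y in A, g y ∂P = ∫⁻ y in A, L y * g y ∂Q := by
    rw [hPQ, setLIntegral_withDensity_eq_setLIntegral_mul _ hL hg hA]; rfl
  have hlint : P A ≤ ENNReal.ofReal t * ∫⁻ y, g y ∂Q + ∫⁻ y, ENNReal.ofReal (ψ y) ∂P := calc
    P A = ∫⁻ y in A, (g y + ENNReal.ofReal (ψ y)) ∂P := by simp [hsplit]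
    _ = ∫⁻ y in A, L y * g y ∂Q + ∫⁻ y in A, ENNReal.ofReal (ψ y) ∂P := by
        rw [lintegral_add_left hg, hdens]
    _ ≤ ∫⁻ y in A, ENNReal.ofReal t * g y ∂Q + ∫⁻ y, ENNReal.ofReal (ψ y) ∂P := by
        gcongr 1
        · refine lintegral_mono_ae ((ae_restrict_iff' hA).mpr ?_)
          filter_upwards [hLA] with y hy hyA using mul_le_mul_left (hy hyA) _
        · exact setLIntegral_le_lintegral _ _
    _ ≤ ENNReal.ofReal t * ∫⁻ y, g y ∂Q + ∫⁻ y, ENNReal.ofReal (ψ y) ∂P := by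
        rw [lintegral_const_mul _ hg]
        gcongr 1
        exact mul_le_mul_right (setLIntegral_le_lintegral _ _) _
  have h1ψ : Integrable (fun y => 1 - ψ y) Q := (integrable_const 1).sub (hψint Q)
  have h1 : 0 ≤ ∫ y, (1 - ψ y) ∂Q := integral_nonneg fun y => by simp [(hψ y).2]
  have h2 : 0 ≤ ∫ y, ψ y ∂P := integral_nonneg fun y => (hψ y).1
  rw [← ofReal_integral_eq_lintegral_ofReal h1ψ (.of_forall fun y => by simp [(hψ y).2]),
    ← ofReal_integral_eq_lintegral_ofReal (hψint P) (.of_forall fun y => (hψ y).1),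
    ← ENNReal.ofReal_mul ht, ← ENNReal.ofReal_add (by positivity) h2] at hlint
  exact ENNReal.toReal_le_of_le_ofReal (by positivity) hlint

end ChangeOfMeasure

section Pi

variable {ι : Type*} [Fintype ι] {X : ι → Type*} [∀ i, MeasurableSpace (X i)]
  {μ : (i : ι) → Measure (X i)} [∀ i, IsProbabilityMeasure (μ i)]

theorem lintegral_fintype_prod_eq_prod {F : (i : ι) → X i → ℝ≥0∞} (hF : ∀ i, Measurable (F i)) :
    ∫⁻ x, ∏ i, F i (x i) ∂Measure.pi μ = ∏ i, ∫⁻ y, F i y ∂μ i := by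
  rw [lintegral_prod_eq_prod_lintegral_of_indepFun _ _
    (iIndepFun_pi fun i => (hF i).aemeasurable) fun i => (hF i).comp (measurable_pi_apply i)]
  exact Finset.prod_congr rfl fun i _ => (measurePreserving_eval μ i).lintegral_comp (hF i)

theorem pi_withDensity {f : (i : ι) → X i → ℝ≥0∞} (hf : ∀ i, Measurable (f i))
    [∀ i, SigmaFinite ((μ i).withDensity (f i))] :
    Measure.pi (fun i => (μ i).withDensity (f i))
      = (Measure.pi μ).withDensity fun x => ∏ i, f i (x i) := by
  refine Measure.pi_eq fun s hs => ?_
  have hind : (Set.univ.pi s).indicator (fun x => ∏ i, f i (x i))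
      = fun x => ∏ i, (s i).indicator (f i) (x i) := by
    ext x
    classical
    simp [Set.indicator, Finset.prod_ite_zero]
  rw [withDensity_apply _ (.univ_pi hs), ← lintegral_indicator (.univ_pi hs), hind,
    lintegral_fintype_prod_eq_prod fun i => (hf i).indicator (hs i)]
  exact Finset.prod_congr rfl fun i _ => by
    rw [withDensity_apply _ (hs i), lintegral_indicator (hs i)]

end Pi

section LikelihoodRatio

variable {X : Type*} [MeasurableSpace X]

theorem pi_eq_withDensity_prod_rnDeriv {P Q : Measure X}
    [IsProbabilityMeasure P] [IsProbabilityMeasure Q] (h : P ≪ Q) (ι : Type*) [Fintype ι] :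
    Measure.pi (fun _ : ι => P)
      = (Measure.pi fun _ : ι => Q).withDensity fun x => ∏ i, P.rnDeriv Q (x i) := by
  have : SigmaFinite (Q.withDensity (P.rnDeriv Q)) := by
    rw [Measure.withDensity_rnDeriv_eq P Q h]; infer_instance
  simpa only [Measure.withDensity_rnDeriv_eq P Q h] using
    pi_withDensity (μ := fun _ : ι => Q) fun _ => Measure.measurable_rnDeriv P Q

theorem prod_le_ofReal_exp_of_sum_log_le {ι : Type*} [Fintype ι] {a : ι → ℝ≥0∞}
    (ha : ∀ i, a i ≠ ∞) {c : ℝ} (h : ∑ i, Real.log (a i).toReal ≤ c) :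
    ∏ i, a i ≤ ENNReal.ofReal (Real.exp c) := by
  rw [← ENNReal.ofReal_toReal (ENNReal.prod_ne_top fun i _ => ha i), ENNReal.toReal_prod]
  refine ENNReal.ofReal_le_ofReal ?_
  calc ∏ i, (a i).toReal ≤ ∏ i, Real.exp (Real.log (a i).toReal) :=
        Finset.prod_le_prod (fun _ _ => ENNReal.toReal_nonneg) fun i _ => Real.le_exp_log _
    _ = Real.exp (∑ i, Real.log (a i).toReal) := (Real.exp_sum _ _).symm
    _ ≤ Real.exp c := Real.exp_le_exp.mpr h

theorem one_sub_measureReal_sub_integral_le {ι : Type*} [Fintype ι] {P₀ P₁ : Measure X}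
    [IsProbabilityMeasure P₀] [IsProbabilityMeasure P₁] (hac : P₀ ≪ P₁)
    {ψ : (ι → X) → ℝ} (hψm : Measurable ψ) (hψ : ∀ x, 0 ≤ ψ x ∧ ψ x ≤ 1) (c : ℝ) :
    1 - (Measure.pi fun _ : ι => P₀).real {x | c < ∑ i, llr P₀ P₁ (x i)}
        - ∫ x, ψ x ∂(Measure.pi fun _ : ι => P₀)
      ≤ Real.exp c * ∫ x, (1 - ψ x) ∂(Measure.pi fun _ : ι => P₁) := by
  have hsum : Measurable fun x : ι → X => ∑ i, llr P₀ P₁ (x i) := by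
    fun_prop (disch := exact measurable_llr P₀ P₁)
  have hA : MeasurableSet {x : ι → X | ∑ i, llr P₀ P₁ (x i) ≤ c} :=
    measurableSet_le hsum measurable_const
  have hfin : ∀ᵐ x ∂(Measure.pi fun _ : ι => P₁), ∀ i, P₀.rnDeriv P₁ (x i) ≠ ∞ :=
    ae_all_iff.mpr fun i =>
      (measurePreserving_eval (fun _ : ι => P₁) i).quasiMeasurePreserving.ae
        (Measure.rnDeriv_ne_top P₀ P₁)
  have hNP := measureReal_le_mul_integral_add (by fun_prop)
    (pi_eq_withDensity_prod_rnDeriv hac ι) hA (Real.exp_nonneg c)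
    (hfin.mono fun _ hx hxA => prod_le_ofReal_exp_of_sum_log_le hx hxA) hψm hψ
  have hcompl : {x : ι → X | c < ∑ i, llr P₀ P₁ (x i)} = {x | ∑ i, llr P₀ P₁ (x i) ≤ c}ᶜ := by
    ext; simp
  rw [hcompl, probReal_compl_eq_one_sub hA]
  linarith

end LikelihoodRatio

section LawOfLargeNumbers

variable {X : Type*} [MeasurableSpace X] (μ : Measure X) [IsProbabilityMeasure μ]

theorem map_infinitePi_fin_restrict (n : ℕ) :
    (Measure.infinitePi fun _ : ℕ => μ).map (fun ω (i : Fin n) => ω i)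
      = Measure.pi fun _ : Fin n => μ := by
  rw [Measure.map_infinitePi_infinitePi_of_inj Fin.val_injective, Measure.infinitePi_eq_pi]

theorem tendsto_measure_pi_lt_sum {f : X → ℝ} (hfm : Measurable f) (hf : Integrable f μ)
    {ε : ℝ} (hε : 0 < ε) :
    Tendsto (fun n : ℕ => (Measure.pi fun _ : Fin n => μ)
      {x | n * (∫ y, f y ∂μ + ε) < ∑ i, f (x i)}) atTop (𝓝 0) := by
  set ν := Measure.infinitePi fun _ : ℕ => μ
  have heval (i : ℕ) : MeasurePreserving (fun ω : ℕ → X => ω i) ν μ :=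
    measurePreserving_eval_infinitePi _ i
  have hident (i : ℕ) : IdentDistrib (fun ω : ℕ → X => f (ω i)) (fun ω => f (ω 0)) ν ν :=
    IdentDistrib.comp ⟨(heval i).aemeasurable, (heval 0).aemeasurable,
      by rw [(heval i).map_eq, (heval 0).map_eq]⟩ hfm
  have hslln := strong_law_ae_real (fun i (ω : ℕ → X) => f (ω i))
    ((heval 0).integrable_comp_of_integrable hf)
    (fun i j hij => (iIndepFun_infinitePi (X := fun _ => f) fun _ => hfm).indepFun hij) hident
  have hmean : ∫ ω, f (ω 0) ∂ν = ∫ y, f y ∂μ := by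
    rw [← integral_map (heval 0).aemeasurable hfm.aestronglyMeasurable, (heval 0).map_eq]
  rw [hmean] at hslln
  have hmeas (n : ℕ) : Measurable fun ω : ℕ → X => (∑ i ∈ Finset.range n, f (ω i)) / n :=
    (Finset.measurable_sum _ fun i _ => hfm.comp (heval i).measurable).div_const _
  have hprob := tendstoInMeasure_iff_dist.mp (tendstoInMeasure_of_tendsto_ae
    (fun n => (hmeas n).aestronglyMeasurable) hslln) ε hε
  refine tendsto_of_tendsto_of_tendsto_of_le_of_le' tendsto_const_nhds hprob
    (.of_forall fun _ => zero_le) ?_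
  filter_upwards [eventually_gt_atTop 0] with n hn
  rw [← map_infinitePi_fin_restrict,
    Measure.map_apply (by fun_prop) (measurableSet_lt (by fun_prop) (by fun_prop))]
  refine measure_mono fun ω hω => ?_
  simp only [Set.preimage_ofPred_eq, Set.mem_ofPred_eq,
    Fin.sum_univ_eq_sum_range (fun i => f (ω i))] at hω ⊢
  rw [Real.dist_eq, le_abs, le_sub_iff_add_le, le_div_iff₀ (by positivity)]
  left
  linarith

end LawOfLargeNumbers

theorem limsup_negLogRate_le {β : ℕ → ℝ} {K a : ℝ} (hK : 0 < K)
    (hβ : ∀ᶠ n : ℕ in atTop, K * Real.exp (-(n * a)) ≤ β n) :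
    atTop.limsup (fun n => negLogRate n (β n)) ≤ ENNReal.ofReal a := by
  have hlim : Tendsto (fun n : ℕ => ENNReal.ofReal (a - Real.log K / n)) atTop
      (𝓝 (ENNReal.ofReal a)) :=
    (ENNReal.continuous_ofReal.tendsto a).comp <| by
      simpa using tendsto_const_nhds.sub (tendsto_const_div_atTop_nhds_zero_nat (Real.log K))
  refine (limsup_le_limsup ?_).trans_eq hlim.limsup_eq
  filter_upwards [hβ, eventually_gt_atTop 0] with n hn hn0
  have hpos : 0 < β n := (by positivity : 0 < K * Real.exp (-(n * a))).trans_le hn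
  rw [negLogRate, if_neg hpos.ne']
  refine ENNReal.ofReal_le_ofReal ?_
  have hlog := Real.log_le_log (by positivity) hn
  rw [Real.log_mul hK.ne' (Real.exp_pos _).ne', Real.log_exp] at hlog
  have hn' : (0 : ℝ) < n := by exact_mod_cast hn0
  calc -(1 / (n : ℝ)) * Real.log (β n) ≤ -(1 / (n : ℝ)) * (Real.log K + -(n * a)) :=
        mul_le_mul_of_nonpos_left hlog (by simp)
    _ = a - Real.log K / n := by field_simp; ring

section SteinConverse

variable {X : Type*} [MeasurableSpace X] {P₀ P₁ : Measure X} [IsProbabilityMeasure P₀]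
  [IsProbabilityMeasure P₁] {α : ℝ} {φ : ∀ n : ℕ, (Fin n → X) → ℝ}

theorem limsup_negLogRate_le_integral_llr_add (hac : P₀ ≪ P₁)
    (hint : Integrable (llr P₀ P₁) P₀) (hα : α < 1) (hφm : ∀ n, Measurable (φ n))
    (hφ01 : ∀ n x, 0 ≤ φ n x ∧ φ n x ≤ 1)
    (hfa : ∀ n, ∫ x, φ n x ∂(Measure.pi fun _ : Fin n => P₀) ≤ α) {ε : ℝ} (hε : 0 < ε) :
    atTop.limsup (fun n => negLogRate n (∫ x, (1 - φ n x) ∂(Measure.pi fun _ : Fin n => P₁)))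
      ≤ ENNReal.ofReal (∫ x, llr P₀ P₁ x ∂P₀ + ε) := by
  have hK : 0 < (1 - α) / 2 := by linarith
  refine limsup_negLogRate_le hK ?_
  filter_upwards [(tendsto_measure_pi_lt_sum P₀ (measurable_llr P₀ P₁) hint hε).eventually
    (gt_mem_nhds (ENNReal.ofReal_pos.mpr hK))] with n hn
  set c := n * (∫ x, llr P₀ P₁ x ∂P₀ + ε)
  have hNP := one_sub_measureReal_sub_integral_le hac (hφm n) (hφ01 n) c
  have hdev :
      (Measure.pi fun _ : Fin n => P₀).real {x | c < ∑ i, llr P₀ P₁ (x i)} < (1 - α) / 2 :=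
    ENNReal.toReal_lt_of_lt_ofReal hn
  calc (1 - α) / 2 * Real.exp (-c)
      ≤ Real.exp (-c) * Real.exp c * ∫ x, (1 - φ n x) ∂(Measure.pi fun _ : Fin n => P₁) := by
        rw [mul_assoc, mul_comm]
        gcongr
        linarith [hfa n]
    _ = _ := by rw [← Real.exp_add, neg_add_cancel, Real.exp_zero, one_mul]

theorem limsup_negLogRate_le_klDiv (hα : α < 1) (hφm : ∀ n, Measurable (φ n))
    (hφ01 : ∀ n x, 0 ≤ φ n x ∧ φ n x ≤ 1)
    (hfa : ∀ n, ∫ x, φ n x ∂(Measure.pi fun _ : Fin n => P₀) ≤ α) :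
    atTop.limsup (fun n => negLogRate n (∫ x, (1 - φ n x) ∂(Measure.pi fun _ : Fin n => P₁)))
      ≤ klDiv P₀ P₁ := by
  rw [klDiv]
  split_ifs with hD
  · have hlim : Tendsto (fun ε => ENNReal.ofReal (∫ x, llr P₀ P₁ x ∂P₀ + ε)) (𝓝[>] 0)
        (𝓝 (ENNReal.ofReal (∫ x, llr P₀ P₁ x ∂P₀))) :=
      ((ENNReal.continuous_ofReal.comp (continuous_const_add _)).tendsto' 0 _
        (by simp)).mono_left nhdsWithin_le_nhds
    exact ge_of_tendsto hlim (eventually_nhdsWithin_of_forall fun ε hε =>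
      limsup_negLogRate_le_integral_llr_add hD.1 hD.2 hα hφm hφ01 hfa hε)
  · exact le_top

end SteinConverse

theorem stmt4_general
    {X : Type*} [MeasurableSpace X]
    (𝒫₀ 𝒫₁ : Set (Measure X))
    (h₀prob : ∀ P ∈ 𝒫₀, IsProbabilityMeasure P) (h₁prob : ∀ P ∈ 𝒫₁, IsProbabilityMeasure P)
    (α : ℝ) (hα : α ∈ Set.Ioo (0 : ℝ) 1)
    (φ : ∀ n : ℕ, (Fin n → X) → ℝ)
    (hφm : ∀ n, Measurable (φ n)) (hφ01 : ∀ n x, 0 ≤ φ n x ∧ φ n x ≤ 1)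
    (hfa : ∀ n, ∀ P₀ ∈ 𝒫₀, ∫ x, φ n x ∂(Measure.pi fun _ : Fin n => P₀) ≤ α) :
    (⨅ P₁ ∈ 𝒫₁, Filter.atTop.limsup fun n =>
        negLogRate n (∫ x, (1 - φ n x) ∂(Measure.pi fun _ : Fin n => P₁)))
      ≤ ⨅ P₀ ∈ 𝒫₀, ⨅ P₁ ∈ 𝒫₁, klDiv P₀ P₁ := by
  simp only [le_iInf_iff]
  intro P₀ hP₀ P₁ hP₁
  have := h₀prob P₀ hP₀
  have := h₁prob P₁ hP₁
  exact (iInf₂_le P₁ hP₁).trans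
    (limsup_negLogRate_le_klDiv hα.2 hφm hφ01 fun n => hfa n P₀ hP₀)

/-- Universal upper bound on the worst-case type-II error exponent (robust Chernoff–Stein):
any sequence of tests whose worst-case false alarm probability over `𝒫₀` is at most `α`
has worst-case miss-detection exponent over `𝒫₁` at most `inf_{(P₀,P₁)∈𝒫₀×𝒫₁} D(P₀‖P₁)`. -/
theorem stmt4
    {X : Type*} [MeasurableSpace X]
    (𝒫₀ 𝒫₁ : Set (Measure X))
    (h₀prob : ∀ P ∈ 𝒫₀, IsProbabilityMeasure P) (h₁prob : ∀ P ∈ 𝒫₁, IsProbabilityMeasure P)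
    (h₀ne : 𝒫₀.Nonempty) (h₁ne : 𝒫₁.Nonempty)
    (α : ℝ) (hα : α ∈ Set.Ioo (0 : ℝ) 1)
    (φ : ∀ n : ℕ, (Fin n → X) → ℝ)
    (hφm : ∀ n, Measurable (φ n)) (hφ01 : ∀ n x, 0 ≤ φ n x ∧ φ n x ≤ 1)
    (hfa : ∀ n, ∀ P₀ ∈ 𝒫₀, ∫ x, φ n x ∂(Measure.pi fun _ : Fin n => P₀) ≤ α) :
    (⨅ P₁ ∈ 𝒫₁, Filter.atTop.limsup fun n =>
        negLogRate n (∫ x, (1 - φ n x) ∂(Measure.pi fun _ : Fin n => P₁)))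
      ≤ ⨅ P₀ ∈ 𝒫₀, ⨅ P₁ ∈ 𝒫₁, klDiv P₀ P₁ :=
  stmt4_general 𝒫₀ 𝒫₁ h₀prob h₁prob α hα φ hφm hφ01 hfa
end

section
/- Assume additionally ‖Φ(x)‖² ≤ K for all x ∈ X. Let Q₀ be a probability measure on X, θ ≥ 0, and let 𝒫₀ be the MMD uncertainty set of radius θ centered at Q₀. Fix α ∈ (0,1] and set γₙ = √(2K/n)·(1 + √(log(1/α))). Then for every n and every P₀ ∈ 𝒫₀, the P₀^{⊗n}-probability of the event inf over P ∈ 𝒫₀ of ‖(1/n)∑ᵢ Φ(xᵢ) − μ_P‖_H > γₙ is at most α; i.e., the robust kernel test that rejects when the empirical embedding is at MMD distance more than γₙ from 𝒫₀ has worst-case false alarm probability at most α. -/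
open MeasureTheory
open scoped ENNReal

/-!
Since `P₀ ∈ 𝒫₀`, the infimum is at most the deviation `f(x) = ‖(1/n) ∑ Φ(xᵢ) - μ_{P₀}‖`.
Replacing one sample moves `f` by at most `2√K / n`, so McDiarmid's inequality (obtained from
Hoeffding's lemma by integrating out one coordinate at a time) gives
`P₀^{⊗n}(f ≥ 𝔼 f + ε) ≤ exp (-n ε² / (2K))`. The centred features `Φ(xᵢ) - μ_{P₀}` are
independent, so `𝔼 f² ≤ K / n` and `𝔼 f ≤ √(K/n) ≤ √(2K/n)`; hence `ε = γₙ - 𝔼 f` satisfies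
`n ε² / (2K) ≥ log (1/α)`.
-/

open ProbabilityTheory Real

theorem integral_exp_le_of_forall_sub_le {Ω : Type*} [MeasurableSpace Ω] {μ : Measure Ω}
    [IsProbabilityMeasure μ] {g : Ω → ℝ} (hg : AEMeasurable g μ) {d : ℝ}
    (hd : ∀ ω ω', g ω - g ω' ≤ d) :
    ∫ ω, exp (g ω) ∂μ ≤ exp (∫ ω, g ω ∂μ + d ^ 2 / 8) := by
  have := nonempty_of_isProbabilityMeasure μ
  have hbdd : BddBelow (Set.range g) := by
    obtain ⟨ω₀⟩ := this
    exact ⟨g ω₀ - d, by rintro _ ⟨ω, rfl⟩; linarith [hd ω₀ ω]⟩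
  set a := ⨅ ω, g ω
  have hmem : ∀ ω, g ω ∈ Set.Icc a (a + d) := fun ω =>
    ⟨ciInf_le hbdd ω, by linarith [le_ciInf fun ω' => show g ω - d ≤ g ω' by linarith [hd ω ω']]⟩
  set m := ∫ ω, g ω ∂μ
  have hoeffding := (hasSubgaussianMGF_of_mem_Icc hg (ae_of_all _ hmem)).mgf_le 1
  have hc : ((‖a + d - a‖₊ / 2) ^ 2 : NNReal) * (1 : ℝ) ^ 2 / 2 = d ^ 2 / 8 := by
    simp only [add_sub_cancel_left, NNReal.coe_pow, NNReal.coe_div, coe_nnnorm, norm_eq_abs,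
      NNReal.coe_ofNat, div_pow, sq_abs]
    ring
  rw [hc, mgf] at hoeffding
  calc ∫ ω, exp (g ω) ∂μ = exp m * ∫ ω, exp (1 * (g ω - m)) ∂μ := by
        rw [← integral_const_mul]
        congr with ω
        rw [← exp_add]
        ring_nf
    _ ≤ exp m * exp (d ^ 2 / 8) := by gcongr
    _ = exp (m + d ^ 2 / 8) := (exp_add _ _).symm

section FinCons

variable {X : Type*} [MeasurableSpace X] {n : ℕ}

theorem MeasurableEquiv.piFinSuccAbove_zero_symm_apply (q : X × (Fin n → X)) :
    (MeasurableEquiv.piFinSuccAbove (fun _ => X) 0).symm q = Fin.cons q.1 q.2 := by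
  simp [MeasurableEquiv.piFinSuccAbove_symm_apply, Fin.insertNthEquiv, Fin.insertNth_zero']

theorem measurable_fin_cons :
    Measurable fun q : X × (Fin n → X) => (Fin.cons q.1 q.2 : Fin (n + 1) → X) := by
  have h := (MeasurableEquiv.piFinSuccAbove (fun _ : Fin (n + 1) => X) 0).symm.measurable
  rwa [funext MeasurableEquiv.piFinSuccAbove_zero_symm_apply] at h

theorem integral_pi_fin_succ {E : Type*} [NormedAddCommGroup E] [NormedSpace ℝ E]
    (P : Measure X) [SigmaFinite P] (G : (Fin (n + 1) → X) → E) :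
    ∫ xs, G xs ∂(Measure.pi fun _ => P)
      = ∫ q : X × (Fin n → X), G (Fin.cons q.1 q.2) ∂(P.prod (Measure.pi fun _ => P)) := by
  rw [← (measurePreserving_piFinSuccAbove (fun _ => P) 0).symm.integral_comp']
  simp only [MeasurableEquiv.piFinSuccAbove_zero_symm_apply]

variable (P : Measure X) [IsProbabilityMeasure P] {f : (Fin (n + 1) → X) → ℝ} {B : ℝ}

theorem integrable_cons (hfm : Measurable f) (hB : ∀ xs, |f xs| ≤ B) (zs : Fin n → X) :
    Integrable (fun y => f (Fin.cons y zs)) P :=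
  Integrable.of_bound
    (hfm.comp (measurable_fin_cons.comp measurable_prodMk_right)).aestronglyMeasurable B
    (ae_of_all _ fun _ => hB _)

theorem measurable_integral_cons (hfm : Measurable f) :
    Measurable fun zs : Fin n → X => ∫ y, f (Fin.cons y zs) ∂P :=
  (hfm.comp measurable_fin_cons).stronglyMeasurable.integral_prod_left'.measurable

theorem abs_integral_cons_le (hB : ∀ xs, |f xs| ≤ B) (zs : Fin n → X) :
    |∫ y, f (Fin.cons y zs) ∂P| ≤ B := by
  simpa using norm_integral_le_of_norm_le_const (μ := P)
    (ae_of_all _ fun y => (norm_eq_abs (f (Fin.cons y zs))).trans_le (hB _))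

end FinCons

def HasBoundedDifferences {X ι : Type*} [DecidableEq ι] (f : (ι → X) → ℝ) (d : ℝ) : Prop :=
  ∀ xs i y y', f (Function.update xs i y) - f (Function.update xs i y') ≤ d

namespace HasBoundedDifferences

variable {X : Type*} {n : ℕ} {f : (Fin n → X) → ℝ} {d : ℝ}

theorem abs_sub_le (hf : HasBoundedDifferences f d) (xs : Fin n → X) (i : Fin n) (y y' : X) :
    |f (Function.update xs i y) - f (Function.update xs i y')| ≤ d :=
  abs_sub_le_iff.2 ⟨hf xs i y y', hf xs i y' y⟩

theorem const_mul (hf : HasBoundedDifferences f d) (c : ℝ) :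
    HasBoundedDifferences (fun xs => c * f xs) (|c| * d) := fun xs i y y' =>
  calc c * f (Function.update xs i y) - c * f (Function.update xs i y')
      ≤ |c * (f (Function.update xs i y) - f (Function.update xs i y'))| := by
        rw [mul_sub]; exact le_abs_self _
    _ ≤ |c| * d := by rw [abs_mul]; gcongr; exact hf.abs_sub_le xs i y y'

theorem cons_sub_cons_le {f : (Fin (n + 1) → X) → ℝ} (hf : HasBoundedDifferences f d)
    (zs : Fin n → X) (y y' : X) : f (Fin.cons y zs) - f (Fin.cons y' zs) ≤ d := by
  simpa only [Fin.update_cons_zero] using hf (Fin.cons y zs) 0 y y'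

variable [MeasurableSpace X] (P : Measure X) [IsProbabilityMeasure P] {B : ℝ}

theorem integral_cons {f : (Fin (n + 1) → X) → ℝ} (hf : HasBoundedDifferences f d)
    (hfm : Measurable f) (hB : ∀ xs, |f xs| ≤ B) :
    HasBoundedDifferences (fun zs => ∫ y, f (Fin.cons y zs) ∂P) d := by
  intro zs i w w'
  have hint := integrable_cons P hfm hB
  rw [← integral_sub (hint _) (hint _)]
  calc ∫ y, (f (Fin.cons y (Function.update zs i w))
          - f (Fin.cons y (Function.update zs i w'))) ∂P
      ≤ ∫ _, d ∂P := integral_mono ((hint _).sub (hint _)) (integrable_const d) fun y => by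
        simpa only [Fin.cons_update] using hf (Fin.cons y zs) i.succ w w'
    _ = d := by simp

theorem integral_exp_le_exp_mul_integral_exp_integral_cons {f : (Fin (n + 1) → X) → ℝ}
    (hf : HasBoundedDifferences f d) (hfm : Measurable f) (hB : ∀ xs, |f xs| ≤ B) :
    ∫ xs, exp (f xs) ∂(Measure.pi fun _ => P)
      ≤ exp (d ^ 2 / 8) * ∫ zs, exp (∫ y, f (Fin.cons y zs) ∂P) ∂(Measure.pi fun _ => P) := by
  set h : (Fin n → X) → ℝ := fun zs => ∫ y, f (Fin.cons y zs) ∂P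
  have hexpF_int : Integrable (fun q : X × (Fin n → X) => exp (f (Fin.cons q.1 q.2)))
      (P.prod (Measure.pi fun _ => P)) :=
    Integrable.of_bound (measurable_exp.comp (hfm.comp measurable_fin_cons)).aestronglyMeasurable
      (exp B) (ae_of_all _ fun _ => by
        rw [norm_of_nonneg (exp_pos _).le]; exact exp_le_exp.2 (abs_le.1 (hB _)).2)
  have hsection : ∀ zs, ∫ y, exp (f (Fin.cons y zs)) ∂P ≤ exp (h zs + d ^ 2 / 8) := fun zs =>
    integral_exp_le_of_forall_sub_le (integrable_cons P hfm hB zs).aemeasurable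
      (hf.cons_sub_cons_le zs)
  have hh_int : Integrable (fun zs => exp (h zs + d ^ 2 / 8)) (Measure.pi fun _ => P) :=
    Integrable.of_bound
      (measurable_exp.comp ((measurable_integral_cons P hfm).add_const _)).aestronglyMeasurable
      (exp (B + d ^ 2 / 8)) (ae_of_all _ fun zs => by
        rw [norm_of_nonneg (exp_pos _).le]
        exact exp_le_exp.2 (by linarith [(abs_le.1 (abs_integral_cons_le P hB zs)).2]))
  calc ∫ xs, exp (f xs) ∂(Measure.pi fun _ => P)
      = ∫ zs, ∫ y, exp (f (Fin.cons y zs)) ∂P ∂(Measure.pi fun _ => P) := by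
        rw [integral_pi_fin_succ, integral_prod_symm _ hexpF_int]
    _ ≤ ∫ zs, exp (h zs + d ^ 2 / 8) ∂(Measure.pi fun _ => P) :=
        integral_mono hexpF_int.integral_prod_right hh_int hsection
    _ = exp (d ^ 2 / 8) * ∫ zs, exp (h zs) ∂(Measure.pi fun _ => P) := by
        rw [← integral_const_mul]; simp only [exp_add, mul_comm]

theorem integral_exp_le (hf : HasBoundedDifferences f d) (hfm : Measurable f)
    (hB : ∀ xs, |f xs| ≤ B) :
    ∫ xs, exp (f xs) ∂(Measure.pi fun _ => P)
      ≤ exp (∫ xs, f xs ∂(Measure.pi fun _ => P) + n * (d ^ 2 / 8)) := by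
  induction n with
  | zero =>
    rw [Measure.pi_of_empty]
    simp
  | succ n ih =>
    have hF_int : Integrable (fun q : X × (Fin n → X) => f (Fin.cons q.1 q.2))
        (P.prod (Measure.pi fun _ => P)) :=
      Integrable.of_bound (hfm.comp measurable_fin_cons).aestronglyMeasurable B
        (ae_of_all _ fun _ => hB _)
    have hmean : ∫ zs, ∫ y, f (Fin.cons y zs) ∂P ∂(Measure.pi fun _ => P)
        = ∫ xs, f xs ∂(Measure.pi fun _ => P) := by
      rw [integral_pi_fin_succ, integral_prod_symm _ hF_int]
    calc ∫ xs, exp (f xs) ∂(Measure.pi fun _ => P)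
        ≤ exp (d ^ 2 / 8) * ∫ zs, exp (∫ y, f (Fin.cons y zs) ∂P) ∂(Measure.pi fun _ => P) :=
          hf.integral_exp_le_exp_mul_integral_exp_integral_cons P hfm hB
      _ ≤ exp (d ^ 2 / 8) * exp (∫ zs, ∫ y, f (Fin.cons y zs) ∂P ∂(Measure.pi fun _ => P)
            + n * (d ^ 2 / 8)) := by
          gcongr
          exact ih (hf.integral_cons P hfm hB) (measurable_integral_cons P hfm)
            (abs_integral_cons_le P hB)
      _ = exp (∫ xs, f xs ∂(Measure.pi fun _ => P) + (n + 1 : ℕ) * (d ^ 2 / 8)) := by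
          rw [← exp_add, hmean]; push_cast; ring_nf

theorem hasSubgaussianMGF (hf : HasBoundedDifferences f d) (hfm : Measurable f)
    (hB : ∀ xs, |f xs| ≤ B) :
    HasSubgaussianMGF (fun xs => f xs - ∫ xs, f xs ∂(Measure.pi fun _ => P))
      (n * d ^ 2 / 4).toNNReal (Measure.pi fun _ => P) where
  integrable_exp_mul _ := integrable_exp_mul_of_mem_Icc (hfm.sub_const _).aemeasurable
    (ae_of_all _ fun xs => ⟨sub_le_sub_right (abs_le.1 (hB xs)).1 _,
      sub_le_sub_right (abs_le.1 (hB xs)).2 _⟩)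
  mgf_le t := by
    set m := ∫ xs, f xs ∂(Measure.pi fun _ => P)
    have h := (hf.const_mul t).integral_exp_le P (hfm.const_mul t)
      (B := |t| * B) fun xs => by rw [abs_mul]; gcongr; exact hB xs
    rw [integral_const_mul] at h
    exact calc
      mgf (fun xs => f xs - m) (Measure.pi fun _ => P) t
          = exp (-(t * m)) * ∫ xs, exp (t * f xs) ∂(Measure.pi fun _ => P) := by
        rw [mgf, ← integral_const_mul]
        congr with xs
        rw [← exp_add]; ring_nf
      _ ≤ exp (-(t * m)) * exp (t * m + n * ((|t| * d) ^ 2 / 8)) := by gcongr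
      _ = exp ((n * d ^ 2 / 4).toNNReal * t ^ 2 / 2) := by
        rw [← exp_add, Real.coe_toNNReal _ (by positivity), mul_pow, sq_abs]
        congr 1
        ring

theorem measureReal_ge_le (hf : HasBoundedDifferences f d) (hfm : Measurable f)
    (hB : ∀ xs, |f xs| ≤ B) {ε : ℝ} (hε : 0 ≤ ε) :
    (Measure.pi fun _ => P).real {xs | ε ≤ f xs - ∫ xs, f xs ∂(Measure.pi fun _ => P)}
      ≤ exp (-2 * ε ^ 2 / (n * d ^ 2)) := by
  convert (hf.hasSubgaussianMGF P hfm hB).measure_ge_le hε using 2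
  rw [Real.coe_toNNReal _ (by positivity)]
  ring

end HasBoundedDifferences

theorem sq_integral_le_integral_sq {Ω : Type*} [MeasurableSpace Ω] {μ : Measure Ω}
    [IsProbabilityMeasure μ] {f : Ω → ℝ} (hf : MemLp f 2 μ) :
    (∫ x, f x ∂μ) ^ 2 ≤ ∫ x, f x ^ 2 ∂μ := by
  have h := variance_nonneg f μ
  rw [variance_eq_sub hf] at h
  simpa [sub_nonneg] using h

theorem norm_inv_smul_sum_le {E : Type*} [SeminormedAddCommGroup E] [NormedSpace ℝ E] {n : ℕ}
    {v : Fin n → E} {C : ℝ} (hC : 0 ≤ C) (hv : ∀ i, ‖v i‖ ≤ C) :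
    ‖(n : ℝ)⁻¹ • ∑ i, v i‖ ≤ C := by
  rw [norm_smul, norm_inv, Real.norm_natCast]
  calc (n : ℝ)⁻¹ * ‖∑ i, v i‖ ≤ (n : ℝ)⁻¹ * (n * C) := by
        gcongr
        exact (norm_sum_le _ _).trans ((Finset.sum_le_sum fun i _ => hv i).trans_eq (by simp))
    _ ≤ C := by
        rcases n.eq_zero_or_pos with rfl | hn
        · simpa using hC
        · rw [inv_mul_cancel_left₀ (by positivity)]

theorem Finset.sum_comp_update_sub_sum_comp_update {ι X M : Type*} [Fintype ι] [DecidableEq ι]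
    [AddCommGroup M] (Φ : X → M) (xs : ι → X) (i : ι) (y y' : X) :
    ∑ j, Φ (Function.update xs i y j) - ∑ j, Φ (Function.update xs i y' j) = Φ y - Φ y' := by
  simp only [← Function.comp_apply (f := Φ), Function.comp_update,
    Finset.sum_update_of_mem (Finset.mem_univ i)]
  abel

section EmpiricalMMD

variable {X H : Type*} [NormedAddCommGroup H] [NormedSpace ℝ H] [MeasurableSpace X]

noncomputable def empiricalMMD (P : Measure X) (Φ : X → H) {n : ℕ} (xs : Fin n → X) : ℝ :=
  ‖(n : ℝ)⁻¹ • ∑ i, Φ (xs i) - ∫ x, Φ x ∂P‖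

variable (P : Measure X) {Φ : X → H} {K : ℝ} {n : ℕ}

theorem measurable_empiricalMMD (hΦm : StronglyMeasurable Φ) :
    Measurable (empiricalMMD P Φ (n := n)) :=
  (((Finset.stronglyMeasurable_fun_sum _ fun i _ => hΦm.comp_measurable
    (measurable_pi_apply i)).const_smul _).sub stronglyMeasurable_const).norm.measurable

theorem abs_empiricalMMD_le [IsProbabilityMeasure P] (hΦK : ∀ x, ‖Φ x‖ ^ 2 ≤ K) (xs : Fin n → X) :
    |empiricalMMD P Φ xs| ≤ 2 * √K := by
  have hΦC : ∀ x, ‖Φ x‖ ≤ √K := fun x => (le_abs_self _).trans (Real.abs_le_sqrt (hΦK x))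
  have hμC : ‖∫ x, Φ x ∂P‖ ≤ √K := by
    simpa using norm_integral_le_of_norm_le_const (ae_of_all P hΦC)
  rw [empiricalMMD, abs_of_nonneg (norm_nonneg _)]
  linarith [norm_sub_le ((n : ℝ)⁻¹ • ∑ i, Φ (xs i)) (∫ x, Φ x ∂P),
    norm_inv_smul_sum_le (Real.sqrt_nonneg K) fun i => hΦC (xs i)]

theorem hasBoundedDifferences_empiricalMMD (hΦK : ∀ x, ‖Φ x‖ ^ 2 ≤ K) :
    HasBoundedDifferences (empiricalMMD P Φ (n := n)) ((n : ℝ)⁻¹ * (2 * √K)) := by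
  intro xs i y y'
  have hΦC : ∀ x, ‖Φ x‖ ≤ √K := fun x => (le_abs_self _).trans (Real.abs_le_sqrt (hΦK x))
  calc empiricalMMD P Φ (Function.update xs i y) - empiricalMMD P Φ (Function.update xs i y')
      ≤ ‖(n : ℝ)⁻¹ • (∑ j, Φ (Function.update xs i y j) - ∑ j, Φ (Function.update xs i y' j))‖ := by
        rw [smul_sub, ← sub_sub_sub_cancel_right _ _ (∫ x, Φ x ∂P)]
        exact norm_sub_norm_le _ _
    _ ≤ (n : ℝ)⁻¹ * (2 * √K) := by
        rw [Finset.sum_comp_update_sub_sum_comp_update, norm_smul, norm_inv, Real.norm_natCast]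
        gcongr
        linarith [norm_sub_le (Φ y) (Φ y'), hΦC y, hΦC y']

theorem measureReal_empiricalMMD_sub_integral_ge_le [IsProbabilityMeasure P]
    (hΦm : StronglyMeasurable Φ) (hΦK : ∀ x, ‖Φ x‖ ^ 2 ≤ K) (hn : 0 < n) {ε : ℝ} (hε : 0 ≤ ε) :
    (Measure.pi fun _ : Fin n => P).real
        {xs | ε ≤ empiricalMMD P Φ xs - ∫ xs, empiricalMMD P Φ xs ∂(Measure.pi fun _ : Fin n => P)}
      ≤ exp (-(n * ε ^ 2 / (2 * K))) := by
  have := nonempty_of_isProbabilityMeasure P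
  have hK : 0 ≤ K := (sq_nonneg _).trans (hΦK (Classical.arbitrary X))
  have hd : (n : ℝ) * ((n : ℝ)⁻¹ * (2 * √K)) ^ 2 = 4 * K / n := by
    rw [mul_pow, mul_pow, Real.sq_sqrt hK]
    field_simp
    ring
  convert (hasBoundedDifferences_empiricalMMD P hΦK).measureReal_ge_le P
    (measurable_empiricalMMD P hΦm) (abs_empiricalMMD_le P hΦK) hε using 2
  rw [hd, div_div_eq_mul_div]
  ring

end EmpiricalMMD

section InnerProductSpace

variable {X H : Type*} [NormedAddCommGroup H] [InnerProductSpace ℝ H] [CompleteSpace H]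
  [MeasurableSpace X] (P : Measure X) [IsProbabilityMeasure P] {Φ : X → H} {K : ℝ} {n : ℕ}

theorem integral_norm_sub_integral_sq (hΦ : Integrable Φ P)
    (hΦ2 : Integrable (fun x => ‖Φ x‖ ^ 2) P) :
    ∫ x, ‖Φ x - ∫ x, Φ x ∂P‖ ^ 2 ∂P = ∫ x, ‖Φ x‖ ^ 2 ∂P - ‖∫ x, Φ x ∂P‖ ^ 2 := by
  set μ := ∫ x, Φ x ∂P
  have hcross : Integrable (fun x => 2 * inner ℝ (Φ x) μ) P := (hΦ.inner_const μ).const_mul 2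
  have hcross_eq : ∫ x, 2 * inner ℝ (Φ x) μ ∂P = 2 * ‖μ‖ ^ 2 := by
    simp_rw [real_inner_comm μ]
    rw [integral_const_mul, integral_inner hΦ, real_inner_self_eq_norm_sq]
  simp_rw [norm_sub_sq_real]
  rw [integral_add (f := fun x => ‖Φ x‖ ^ 2 - 2 * inner ℝ (Φ x) μ) (hΦ2.sub hcross)
    (integrable_const _), integral_sub hΦ2 hcross, hcross_eq, integral_const, probReal_univ,
    one_smul]
  ring

theorem integral_norm_sum_sq_of_integral_eq_zero {Z : X → H} (hZm : StronglyMeasurable Z)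
    {C : ℝ} (hZC : ∀ x, ‖Z x‖ ≤ C) (hZ0 : ∫ x, Z x ∂P = 0) :
    ∫ xs, ‖∑ i, Z (xs i)‖ ^ 2 ∂(Measure.pi fun _ : Fin n => P) = n * ∫ x, ‖Z x‖ ^ 2 ∂P := by
  induction n with
  | zero => simp
  | succ n ih =>
    set S : (Fin n → X) → H := fun zs => ∑ i, Z (zs i)
    have hSm : StronglyMeasurable S :=
      Finset.stronglyMeasurable_fun_sum _ fun i _ => hZm.comp_measurable (measurable_pi_apply i)
    have hSC : ∀ zs, ‖S zs‖ ≤ n * C := fun zs =>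
      (norm_sum_le _ _).trans ((Finset.sum_le_sum fun i _ => hZC (zs i)).trans_eq (by simp))
    have hZ2 : Integrable (fun x => ‖Z x‖ ^ 2) P :=
      Integrable.of_bound (hZm.norm.pow 2).aestronglyMeasurable (C ^ 2)
        (ae_of_all _ fun x => by rw [norm_pow, norm_norm]; gcongr; exact hZC x)
    have hS2 : Integrable (fun zs => ‖S zs‖ ^ 2) (Measure.pi fun _ : Fin n => P) :=
      Integrable.of_bound (hSm.norm.pow 2).aestronglyMeasurable ((n * C) ^ 2)
        (ae_of_all _ fun zs => by rw [norm_pow, norm_norm]; gcongr; exact hSC zs)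
    have hcross : Integrable (fun q : X × (Fin n → X) => 2 * inner ℝ (S q.2) (Z q.1))
        (P.prod (Measure.pi fun _ => P)) :=
      Integrable.of_bound (((hSm.comp_measurable measurable_snd).inner
          (hZm.comp_measurable measurable_fst)).const_mul 2).aestronglyMeasurable
        (2 * (n * C * C)) (ae_of_all _ fun q => by
          rw [norm_mul, Real.norm_two]
          gcongr
          exact (norm_inner_le_norm _ _).trans
            (mul_le_mul (hSC _) (hZC _) (norm_nonneg _) ((norm_nonneg _).trans (hSC q.2))))
    have hcross0 : ∫ q : X × (Fin n → X), 2 * inner ℝ (S q.2) (Z q.1)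
        ∂(P.prod (Measure.pi fun _ => P)) = 0 := by
      have hZ : Integrable Z P := Integrable.of_bound hZm.aestronglyMeasurable C (ae_of_all _ hZC)
      rw [integral_prod_symm _ hcross]
      simp [integral_const_mul, integral_inner hZ, hZ0]
    calc ∫ xs, ‖∑ i, Z (xs i)‖ ^ 2 ∂(Measure.pi fun _ : Fin (n + 1) => P)
        = ∫ q : X × (Fin n → X), ‖S q.2‖ ^ 2 + 2 * inner ℝ (S q.2) (Z q.1) + ‖Z q.1‖ ^ 2
            ∂(P.prod (Measure.pi fun _ => P)) := by
          rw [integral_pi_fin_succ]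
          congr with q
          rw [Fin.sum_univ_succ, Fin.cons_zero, add_comm, ← norm_add_sq_real]
          simp only [Fin.cons_succ, S]
      _ = (n + 1 : ℕ) * ∫ x, ‖Z x‖ ^ 2 ∂P := by
          rw [integral_add (f := fun q => ‖S q.2‖ ^ 2 + 2 * inner ℝ (S q.2) (Z q.1))
              ((hS2.comp_snd P).add hcross) (hZ2.comp_fst _),
            integral_add (f := fun q => ‖S q.2‖ ^ 2) (hS2.comp_snd P) hcross, hcross0,
            integral_fun_snd (fun zs => ‖S zs‖ ^ 2), integral_fun_fst (fun x => ‖Z x‖ ^ 2), ih]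
          simp only [probReal_univ, one_smul, add_zero, Nat.cast_add, Nat.cast_one]
          ring

theorem integral_empiricalMMD_le (hΦm : StronglyMeasurable Φ) (hΦK : ∀ x, ‖Φ x‖ ^ 2 ≤ K)
    (hn : 0 < n) :
    ∫ xs, empiricalMMD P Φ xs ∂(Measure.pi fun _ : Fin n => P) ≤ √(K / n) := by
  set μ := ∫ x, Φ x ∂P
  set Z : X → H := fun x => Φ x - μ
  have hΦC : ∀ x, ‖Φ x‖ ≤ √K := fun x => (le_abs_self _).trans (Real.abs_le_sqrt (hΦK x))
  have hΦ : Integrable Φ P := Integrable.of_bound hΦm.aestronglyMeasurable _ (ae_of_all _ hΦC)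
  have hΦ2 : Integrable (fun x => ‖Φ x‖ ^ 2) P :=
    Integrable.of_bound (hΦm.norm.pow 2).aestronglyMeasurable K
      (ae_of_all _ fun x => (norm_of_nonneg (sq_nonneg _)).trans_le (hΦK x))
  have hμC : ‖μ‖ ≤ √K := by simpa using norm_integral_le_of_norm_le_const (ae_of_all P hΦC)
  have hZm : StronglyMeasurable Z := hΦm.sub stronglyMeasurable_const
  have hZC : ∀ x, ‖Z x‖ ≤ 2 * √K := fun x => by linarith [norm_sub_le (Φ x) μ, hΦC x]
  have hZ0 : ∫ x, Z x ∂P = 0 := by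
    rw [integral_sub hΦ (integrable_const μ), integral_const, probReal_univ, one_smul, sub_self]
  have hvar : ∫ x, ‖Z x‖ ^ 2 ∂P ≤ K := by
    rw [integral_norm_sub_integral_sq P hΦ hΦ2]
    have := integral_mono hΦ2 (integrable_const K) hΦK
    rw [integral_const, probReal_univ, one_smul] at this
    linarith [sq_nonneg ‖μ‖]
  have hcentre : ∀ xs : Fin n → X, empiricalMMD P Φ xs = ‖(n : ℝ)⁻¹ • ∑ i, Z (xs i)‖ := by
    intro xs
    rw [empiricalMMD, Finset.sum_sub_distrib, smul_sub, Finset.sum_const, Finset.card_univ,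
      Fintype.card_fin, ← Nat.cast_smul_eq_nsmul ℝ, smul_smul, inv_mul_cancel₀ (by positivity),
      one_smul]
  have hsq : ∫ xs, empiricalMMD P Φ xs ^ 2 ∂(Measure.pi fun _ : Fin n => P) ≤ K / n := by
    simp_rw [hcentre, norm_smul, mul_pow, norm_inv, Real.norm_natCast]
    rw [integral_const_mul, integral_norm_sum_sq_of_integral_eq_zero P hZm hZC hZ0]
    calc (n : ℝ)⁻¹ ^ 2 * (n * ∫ x, ‖Z x‖ ^ 2 ∂P) = (∫ x, ‖Z x‖ ^ 2 ∂P) / n := by field_simp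
      _ ≤ K / n := by gcongr
  have hL2 : MemLp (empiricalMMD P Φ) 2 (Measure.pi fun _ : Fin n => P) :=
    MemLp.of_bound (measurable_empiricalMMD P hΦm).aestronglyMeasurable (2 * √K)
      (ae_of_all _ (abs_empiricalMMD_le P hΦK))
  exact (le_abs_self _).trans (Real.abs_le_sqrt ((sq_integral_le_integral_sq hL2).trans hsq))

theorem measure_empiricalMMD_gt_le (hΦm : StronglyMeasurable Φ) (hΦK : ∀ x, ‖Φ x‖ ^ 2 ≤ K)
    (hn : 0 < n) {α : ℝ} (hα : α ∈ Set.Ioc 0 1) :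
    (Measure.pi fun _ : Fin n => P)
        {xs | √(2 * K / n) * (1 + √(log (1 / α))) < empiricalMMD P Φ xs}
      ≤ ENNReal.ofReal α := by
  have := nonempty_of_isProbabilityMeasure P
  -- At `K = 0` the tail bound degenerates (`x / 0 = 0` in the exponent), but then `Φ = 0`.
  rcases ((sq_nonneg _).trans (hΦK (Classical.arbitrary X))).eq_or_lt with rfl | hK
  · have hΦ : Φ = 0 := funext fun x => by simpa using hΦK x
    simp [hΦ, empiricalMMD]
  set m := ∫ xs, empiricalMMD P Φ xs ∂(Measure.pi fun _ : Fin n => P)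
  set L := log (1 / α) with hL_def
  set γ := √(2 * K / n) * (1 + √L)
  have hL : 0 ≤ L := log_nonneg (one_le_one_div hα.1 hα.2)
  have hm : m ≤ √(2 * K / n) :=
    (integral_empiricalMMD_le P hΦm hΦK hn).trans (sqrt_le_sqrt (by gcongr; linarith))
  have hε : √(2 * K / n) * √L ≤ γ - m := by linarith
  have hε2 : 2 * K / n * L ≤ (γ - m) ^ 2 := calc
    2 * K / n * L = (√(2 * K / n) * √L) ^ 2 := by
      rw [mul_pow, sq_sqrt (by positivity), sq_sqrt hL]
    _ ≤ (γ - m) ^ 2 := by gcongr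
  have hexp : exp (-(n * (γ - m) ^ 2 / (2 * K))) ≤ α := calc
    exp (-(n * (γ - m) ^ 2 / (2 * K))) ≤ exp (-L) := by
      gcongr
      rw [le_div_iff₀ (by positivity)]
      rw [div_mul_eq_mul_div, div_le_iff₀ (by positivity)] at hε2
      linarith
    _ = α := by rw [hL_def, one_div, log_inv, neg_neg, exp_log hα.1]
  have htail := measureReal_empiricalMMD_sub_integral_ge_le P hΦm hΦK hn
    ((by positivity : 0 ≤ √(2 * K / n) * √L).trans hε)
  calc (Measure.pi fun _ : Fin n => P) {xs | γ < empiricalMMD P Φ xs}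
      ≤ (Measure.pi fun _ : Fin n => P) {xs | γ - m ≤ empiricalMMD P Φ xs - m} :=
        measure_mono fun xs (hxs : γ < _) => show γ - m ≤ _ - m by linarith
    _ = ENNReal.ofReal ((Measure.pi fun _ : Fin n => P).real
          {xs | γ - m ≤ empiricalMMD P Φ xs - m}) :=
        (ofReal_measureReal (measure_ne_top _ _)).symm
    _ ≤ ENNReal.ofReal α := ENNReal.ofReal_le_ofReal (htail.trans hexp)

end InnerProductSpace

theorem stmt5_general
    {X H : Type*} [MeasurableSpace X]
    [NormedAddCommGroup H] [InnerProductSpace ℝ H] [CompleteSpace H]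
    (Φ : X → H) (hΦm : StronglyMeasurable Φ) (K : ℝ) (hΦb : ∀ x, ‖Φ x‖ ^ 2 ≤ K)
    (Q₀ : Measure X)
    (θ : ℝ) (α : ℝ) (hα : α ∈ Set.Ioc (0 : ℝ) 1) :
    let μemb : Measure X → H := fun P => ∫ x, Φ x ∂P
    let 𝒫₀ : Set (Measure X) := {P | IsProbabilityMeasure P ∧ ‖μemb P - μemb Q₀‖ ≤ θ}
    ∀ n : ℕ, 0 < n → ∀ P₀ ∈ 𝒫₀,
      (Measure.pi fun _ : Fin n => P₀)
          {xs : Fin n → X |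
            Real.sqrt (2 * K / n) * (1 + Real.sqrt (Real.log (1 / α)))
              < ⨅ P : ↥𝒫₀, ‖(n : ℝ)⁻¹ • ∑ i, Φ (xs i) - μemb (P : Measure X)‖}
        ≤ ENNReal.ofReal α := by
  intro μemb 𝒫₀ n hn P₀ hP₀
  have := hP₀.1
  refine (measure_mono fun xs hxs => ?_).trans (measure_empiricalMMD_gt_le P₀ hΦm hΦb hn hα)
  have hbdd : BddBelow (Set.range fun P : 𝒫₀ => ‖(n : ℝ)⁻¹ • ∑ i, Φ (xs i) - μemb P‖) :=
    ⟨0, by rintro _ ⟨P, rfl⟩; exact norm_nonneg _⟩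
  exact lt_of_lt_of_le hxs (ciInf_le hbdd ⟨P₀, hP₀⟩)

/-- The robust kernel test under the Neyman–Pearson setting satisfies the worst-case false
alarm constraint: for every `P₀` in the MMD uncertainty set `𝒫₀` of radius `θ` around `Q₀`,
the probability (under `P₀^{⊗n}`) that the empirical embedding is at MMD distance more than
`γₙ = √(2K/n)(1 + √(log(1/α)))` from `𝒫₀` is at most `α`. -/
theorem stmt5
    {X H : Type*} [MeasurableSpace X]
    [NormedAddCommGroup H] [InnerProductSpace ℝ H] [CompleteSpace H]
    (Φ : X → H) (hΦm : StronglyMeasurable Φ) (K : ℝ) (hΦb : ∀ x, ‖Φ x‖ ^ 2 ≤ K)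
    (Q₀ : Measure X) [IsProbabilityMeasure Q₀]
    (θ : ℝ) (hθ : 0 ≤ θ) (α : ℝ) (hα : α ∈ Set.Ioc (0 : ℝ) 1) :
    let μemb : Measure X → H := fun P => ∫ x, Φ x ∂P
    let 𝒫₀ : Set (Measure X) := {P | IsProbabilityMeasure P ∧ ‖μemb P - μemb Q₀‖ ≤ θ}
    ∀ n : ℕ, 0 < n → ∀ P₀ ∈ 𝒫₀,
      (Measure.pi fun _ : Fin n => P₀)
          {xs : Fin n → X |
            Real.sqrt (2 * K / n) * (1 + Real.sqrt (Real.log (1 / α)))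
              < ⨅ P : ↥𝒫₀, ‖(n : ℝ)⁻¹ • ∑ i, Φ (xs i) - μemb (P : Measure X)‖}
        ≤ ENNReal.ofReal α :=
  stmt5_general Φ hΦm K hΦb Q₀ θ α hα
end

section
/- Let X be a compact metric space. If (P₀ˢ) and (P₁ˢ) are sequences of Borel probability measures on X converging weakly to P₀ and P₁ respectively, then limsup_{s→∞} (P₀ˢ ⊓ P₁ˢ)(X) ≤ (P₀ ⊓ P₁)(X). That is, the affinity (P₀,P₁) ↦ (P₀ ⊓ P₁)(X) = ∫min{p₀,p₁} (with p₀, p₁ densities with respect to a common dominating measure) is upper semicontinuous with respect to weak convergence. -/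
open MeasureTheory Filter Topology

open scoped ENNReal NNReal BoundedContinuousFunction

/-- Auxiliary: the infimum of two probability measures applied to `univ` is bounded by
`∫⁻ g ∂p + ∫⁻ g' ∂q` whenever `g + g' = 1` pointwise, for measurable `g`. -/
lemma aux_inf_le_stmt6 {X : Type*} [MeasurableSpace X]
    (p q : Measure X) (g g' : X → ℝ≥0∞) (hg : Measurable g)
    (hsum : ∀ x, g x + g' x = 1) :
    (p ⊓ q) Set.univ ≤ ∫⁻ x, g x ∂p + ∫⁻ x, g' x ∂q := by
  have h1 : (p ⊓ q) Set.univ = ∫⁻ x, g x ∂(p ⊓ q) + ∫⁻ x, g' x ∂(p ⊓ q) := by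
    rw [← lintegral_add_left hg]
    simp only [hsum]
    simp
  rw [h1]
  exact add_le_add (lintegral_mono' inf_le_left le_rfl)
    (lintegral_mono' inf_le_right le_rfl)

/-- On a compact metric space, the affinity `(P₀,P₁) ↦ (P₀ ⊓ P₁)(X)` is upper semicontinuous
with respect to weak convergence of probability measures. -/
theorem stmt6 {X : Type*} [MetricSpace X] [CompactSpace X]
    [MeasurableSpace X] [BorelSpace X]
    (P₀s P₁s : ℕ → ProbabilityMeasure X) (P₀ P₁ : ProbabilityMeasure X)
    (h₀ : Tendsto P₀s atTop (𝓝 P₀)) (h₁ : Tendsto P₁s atTop (𝓝 P₁)) :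
    Filter.atTop.limsup
        (fun s => (((P₀s s : Measure X) ⊓ (P₁s s : Measure X)) Set.univ))
      ≤ ((P₀ : Measure X) ⊓ (P₁ : Measure X)) Set.univ := by
  rw [Measure.inf_apply MeasurableSet.univ]
  refine le_sInf ?_
  rintro m ⟨t, rfl⟩
  simp only [Set.inter_univ]
  refine ENNReal.le_of_forall_pos_le_add fun ε hε _ => ?_
  have hδ0 : (0 : ℝ≥0∞) < (ε : ℝ≥0∞) / 2 := by
    simp [ENNReal.div_pos_iff, hε.ne']
  set δ : ℝ≥0∞ := (ε : ℝ≥0∞) / 2 with hδ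
  -- choose open approximations
  obtain ⟨U, htU, hUo, hU⟩ := Set.exists_isOpen_lt_of_lt (μ := (P₀ : Measure X)) t _
    (ENNReal.lt_add_right (measure_ne_top _ t) hδ0.ne')
  obtain ⟨V, htV, hVo, hV⟩ := Set.exists_isOpen_lt_of_lt (μ := (P₁ : Measure X)) tᶜ _
    (ENNReal.lt_add_right (measure_ne_top _ tᶜ) hδ0.ne')
  -- Urysohn function
  have hdisj : Disjoint Uᶜ Vᶜ :=
    Set.disjoint_left.2 fun x hxU hxV => hxV (htV fun hxt => hxU (htU hxt))
  obtain ⟨f, hf0, hf1, hf01⟩ :=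
    exists_continuous_zero_one_of_isClosed hUo.isClosed_compl hVo.isClosed_compl hdisj
  -- build bounded continuous ℝ≥0-valued functions
  let g : X →ᵇ ℝ≥0 := BoundedContinuousFunction.mkOfCompact
    ⟨fun x => (f x).toNNReal, continuous_real_toNNReal.comp f.continuous⟩
  let g' : X →ᵇ ℝ≥0 := BoundedContinuousFunction.mkOfCompact
    ⟨fun x => (1 - f x).toNNReal, continuous_real_toNNReal.comp
      (continuous_const.sub f.continuous)⟩
  have hgx : ∀ x, (g x : ℝ≥0∞) = ENNReal.ofReal (f x) := fun x => rfl
  have hg'x : ∀ x, (g' x : ℝ≥0∞) = ENNReal.ofReal (1 - f x) := fun x => rfl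
  have hsum : ∀ x, (g x : ℝ≥0∞) + (g' x : ℝ≥0∞) = 1 := by
    intro x
    rw [hgx, hg'x, ← ENNReal.ofReal_add (hf01 x).1 (sub_nonneg.2 (hf01 x).2)]
    simp
  have key : ∀ s, ((P₀s s : Measure X) ⊓ (P₁s s : Measure X)) Set.univ
      ≤ ∫⁻ x, (g x : ℝ≥0∞) ∂(P₀s s : Measure X) + ∫⁻ x, (g' x : ℝ≥0∞) ∂(P₁s s : Measure X) :=
    fun s => aux_inf_le_stmt6 _ _ _ _
      (measurable_coe_nnreal_ennreal.comp g.continuous.measurable) hsum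
  have lim := (ProbabilityMeasure.tendsto_iff_forall_lintegral_tendsto.mp h₀ g).add
    (ProbabilityMeasure.tendsto_iff_forall_lintegral_tendsto.mp h₁ g')
  have hgU : ∫⁻ x, (g x : ℝ≥0∞) ∂(P₀ : Measure X) ≤ (P₀ : Measure X) U := by
    have : ∀ x, (g x : ℝ≥0∞) ≤ U.indicator (fun _ => (1 : ℝ≥0∞)) x := by
      intro x
      by_cases hx : x ∈ U
      · simp only [Set.indicator_of_mem hx, hgx]
        exact ENNReal.ofReal_le_one.2 (hf01 x).2
      · simp only [Set.indicator_of_notMem hx, hgx, hf0 hx]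
        simp [show f x = 0 from hf0 hx]
    calc ∫⁻ x, (g x : ℝ≥0∞) ∂(P₀ : Measure X)
        ≤ ∫⁻ x, U.indicator (fun _ => (1 : ℝ≥0∞)) x ∂(P₀ : Measure X) := lintegral_mono this
      _ = (P₀ : Measure X) U := lintegral_indicator_one hUo.measurableSet
  have hg'V : ∫⁻ x, (g' x : ℝ≥0∞) ∂(P₁ : Measure X) ≤ (P₁ : Measure X) V := by
    have : ∀ x, (g' x : ℝ≥0∞) ≤ V.indicator (fun _ => (1 : ℝ≥0∞)) x := by
      intro x
      by_cases hx : x ∈ V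
      · simp only [Set.indicator_of_mem hx, hg'x]
        exact ENNReal.ofReal_le_one.2 (by linarith [(hf01 x).1])
      · simp only [Set.indicator_of_notMem hx, hg'x]
        simp [show f x = 1 from hf1 hx]
    calc ∫⁻ x, (g' x : ℝ≥0∞) ∂(P₁ : Measure X)
        ≤ ∫⁻ x, V.indicator (fun _ => (1 : ℝ≥0∞)) x ∂(P₁ : Measure X) := lintegral_mono this
      _ = (P₁ : Measure X) V := lintegral_indicator_one hVo.measurableSet
  calc Filter.atTop.limsup (fun s => (((P₀s s : Measure X) ⊓ (P₁s s : Measure X)) Set.univ))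
      ≤ Filter.atTop.limsup (fun s =>
          ∫⁻ x, (g x : ℝ≥0∞) ∂(P₀s s : Measure X)
            + ∫⁻ x, (g' x : ℝ≥0∞) ∂(P₁s s : Measure X)) :=
        limsup_le_limsup (Eventually.of_forall key)
    _ = ∫⁻ x, (g x : ℝ≥0∞) ∂(P₀ : Measure X) + ∫⁻ x, (g' x : ℝ≥0∞) ∂(P₁ : Measure X) :=
        lim.limsup_eq
    _ ≤ (P₀ : Measure X) U + (P₁ : Measure X) V := add_le_add hgU hg'V
    _ ≤ ((P₀ : Measure X) t + δ) + ((P₁ : Measure X) tᶜ + δ) := add_le_add hU.le hV.le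
    _ = (P₀ : Measure X) t + (P₁ : Measure X) tᶜ + (δ + δ) := by ring
    _ = (P₀ : Measure X) t + (P₁ : Measure X) tᶜ + ε := by
        rw [hδ, ENNReal.div_add_div_same, ENNReal.add_div, ENNReal.add_halves]
end

section
/- Let X be a compact metric space with its Borel σ-algebra and let P₁ be a Borel probability measure on X. Then the map P ↦ D(P‖P₁), from the space of Borel probability measures on X equipped with the topology of weak convergence to [0,∞], is lower semicontinuous: whenever Pˢ converges weakly to P₀, one has liminf_{s→∞} D(Pˢ‖P₁) ≥ D(P₀‖P₁). -/
/-! By the Donsker–Varadhan formula `D(P‖Q) = sup_f (∫ f dP - ∫ e^f dQ + 1)`, the supremum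
running over bounded continuous `f`, the map `P ↦ D(P‖Q)` is a supremum of weakly continuous
functionals, hence lower semicontinuous.

The bound `≤` is Young's inequality `t y ≤ klFun t + e^y - 1` (with `klFun t = t log t + 1 - t`)
integrated against `Q` at `t = dP/dQ`. For `≥`: if `P ≪ Q`, plugging in the truncations
`y = truncLog n t` of `log t` gives nonnegative integrands converging to `klFun t`, so Fatou's
lemma applies whether or not `D(P‖Q)` is finite; otherwise multiples of the indicator of a
`Q`-null set of positive `P`-measure make the functional unbounded. The bounded measurable `f`
obtained this way are replaced by bounded continuous ones, dense in `L¹(P + Q)`; clamping keeps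
`exp` Lipschitz along the approximation. -/

open MeasureTheory Filter Topology
open scoped ENNReal

open Real
open scoped BoundedContinuousFunction
open InformationTheory (klFun klFun_apply klFun_zero klFun_nonneg)

lemma mul_sub_exp_add_one_le_klFun {t : ℝ} (ht : 0 ≤ t) (y : ℝ) :
    t * y - exp y + 1 ≤ klFun t := by
  rcases ht.eq_or_lt with rfl | ht
  · simp [klFun_zero, (exp_pos y).le]
  · have h := mul_le_mul_of_nonneg_left (add_one_le_exp (y - log t)) ht.le
    rw [exp_sub, exp_log ht, mul_div_cancel₀ _ ht.ne'] at h
    rw [klFun_apply]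
    linarith

-- The hypothesis says that `y` lies between `0` and `log t`.
lemma mul_sub_exp_add_one_nonneg {t y : ℝ} (h : (exp y - t) * y ≤ 0) :
    0 ≤ t * y - exp y + 1 := by
  have := klFun_nonneg (exp_pos y).le
  rw [klFun_apply, log_exp] at this
  nlinarith

lemma exp_sub_exp_le_mul_abs {u v b : ℝ} (hu : u ≤ b) : exp u - exp v ≤ exp b * |u - v| := by
  rcases le_total u v with h | h
  · nlinarith [exp_le_exp.2 h, exp_pos b, abs_nonneg (u - v)]
  · have h₁ : 1 - exp (v - u) ≤ |u - v| := by
      rw [abs_of_nonneg (sub_nonneg.2 h)]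
      linarith [add_one_le_exp (v - u)]
    have h₂ : 0 ≤ 1 - exp (v - u) := sub_nonneg.2 (exp_le_one_iff.2 (sub_nonpos.2 h))
    calc exp u - exp v = exp u * (1 - exp (v - u)) := by rw [mul_sub, ← exp_add]; ring_nf
      _ ≤ exp b * |u - v| := mul_le_mul (exp_le_exp.2 hu) h₁ h₂ (exp_pos b).le

-- Taking the logarithm of `max t (exp (-n))` sends `t = 0` to `-n` rather than to `log 0 = 0`.
noncomputable def truncLog (n : ℕ) (t : ℝ) : ℝ := min (log (max t (exp (-n)))) n

lemma abs_truncLog_le (n : ℕ) (t : ℝ) : |truncLog n t| ≤ n := by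
  refine abs_le.2 ⟨le_min ?_ (by linarith [n.cast_nonneg (α := ℝ)]), min_le_right _ _⟩
  calc -(n : ℝ) = log (exp (-n)) := (log_exp _).symm
    _ ≤ log (max t (exp (-n))) := log_le_log (exp_pos _) (le_max_right _ _)

lemma continuous_truncLog (n : ℕ) : Continuous (truncLog n) :=
  ((continuous_id.max continuous_const).log fun _ => (lt_max_of_lt_right (exp_pos _)).ne').min
    continuous_const

lemma mul_truncLog_sub_exp_add_one_nonneg (n : ℕ) (t : ℝ) :
    0 ≤ t * truncLog n t - exp (truncLog n t) + 1 := by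
  apply mul_sub_exp_add_one_nonneg
  have hn : (0 : ℝ) ≤ n := n.cast_nonneg
  rcases le_total t (exp (-n)) with hte | hte
  · have hlog : log (max t (exp (-n))) = -n := by rw [max_eq_right hte, log_exp]
    rw [truncLog, hlog, min_eq_left (by linarith)]
    exact mul_nonpos_of_nonneg_of_nonpos (sub_nonneg.2 hte) (neg_nonpos.2 hn)
  · rw [truncLog, max_eq_left hte]
    rcases le_total (log t) n with hl | hl
    · rw [min_eq_left hl, exp_log ((exp_pos _).trans_le hte), sub_self, zero_mul]
    · rw [min_eq_right hl]
      refine mul_nonpos_of_nonpos_of_nonneg (sub_nonpos.2 ?_) hn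
      calc exp n ≤ exp (log t) := exp_le_exp.2 hl
        _ = t := exp_log ((exp_pos _).trans_le hte)

lemma tendsto_mul_truncLog_sub_exp_add_one {t : ℝ} (ht : 0 ≤ t) :
    Tendsto (fun n : ℕ => t * truncLog n t - exp (truncLog n t) + 1) atTop (𝓝 (klFun t)) := by
  have hexp : Tendsto (fun n : ℕ => exp (-n)) atTop (𝓝 0) :=
    tendsto_exp_neg_atTop_nhds_zero.comp tendsto_natCast_atTop_atTop
  rcases ht.eq_or_lt with rfl | ht
  · have h₀ (n : ℕ) : truncLog n 0 = -n := by
      rw [truncLog, max_eq_right (exp_pos _).le, log_exp, min_eq_left]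
      linarith [n.cast_nonneg (α := ℝ)]
    simpa [h₀, klFun_zero] using hexp.neg.add_const 1
  · refine tendsto_const_nhds.congr' ?_
    filter_upwards [hexp.eventually (eventually_le_nhds ht),
      tendsto_natCast_atTop_atTop.eventually_ge_atTop (log t)] with n hte hl
    rw [truncLog, max_eq_left hte, min_eq_left hl, exp_log ht, klFun_apply]
    ring

section DonskerVaradhan

variable {X : Type*} [MeasurableSpace X]

lemma ofReal_integral_le_lintegral_ofReal (μ : Measure X) (f : X → ℝ) :
    ENNReal.ofReal (∫ x, f x ∂μ) ≤ ∫⁻ x, ENNReal.ofReal (f x) ∂μ := by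
  by_cases hf : Integrable f μ
  · calc ENNReal.ofReal (∫ x, f x ∂μ) ≤ ENNReal.ofReal (∫ x, max (f x) 0 ∂μ) :=
          ENNReal.ofReal_le_ofReal (integral_mono hf hf.pos_part fun x => le_max_left _ _)
      _ = ∫⁻ x, ENNReal.ofReal (max (f x) 0) ∂μ :=
          ofReal_integral_eq_lintegral_ofReal hf.pos_part (ae_of_all _ fun _ => le_max_right _ _)
      _ = ∫⁻ x, ENNReal.ofReal (f x) ∂μ := by simp
  · simp [integral_undef hf]

lemma integrable_of_abs_le {g : X → ℝ} {C : ℝ} (hg : Measurable g) (hC : ∀ x, |g x| ≤ C)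
    (μ : Measure X) [IsFiniteMeasure μ] :
    Integrable g μ :=
  .of_bound hg.aestronglyMeasurable C (ae_of_all _ hC)

lemma integrable_exp_of_abs_le {g : X → ℝ} {C : ℝ} (hg : Measurable g)
    (hC : ∀ x, |g x| ≤ C) (μ : Measure X) [IsFiniteMeasure μ] :
    Integrable (fun x => exp (g x)) μ := by
  refine integrable_of_abs_le hg.exp (C := exp C) (fun x => ?_) μ
  rw [abs_of_pos (exp_pos _)]
  exact exp_le_exp.2 ((le_abs_self _).trans (hC x))

lemma klDiv_eq_informationTheory_klDiv (P Q : Measure X) [IsProbabilityMeasure P]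
    [IsProbabilityMeasure Q] : klDiv P Q = InformationTheory.klDiv P Q := by
  unfold klDiv
  split_ifs with h
  · rw [InformationTheory.klDiv_of_ac_of_integrable h.1 h.2]
    simp [llr]
  · exact (InformationTheory.klDiv_eq_top_iff.2 fun hPQ hint => h ⟨hPQ, hint⟩).symm

noncomputable def donskerVaradhan (P Q : Measure X) (f : X → ℝ) : ℝ :=
  ∫ x, f x ∂P - ∫ x, exp (f x) ∂Q + 1

variable {P Q : Measure X} [IsProbabilityMeasure Q]

lemma donskerVaradhan_eq_integral [IsFiniteMeasure P] (hPQ : P ≪ Q) {f : X → ℝ}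
    (hfP : Integrable f P) (hfQ : Integrable (fun x => exp (f x)) Q) :
    donskerVaradhan P Q f = ∫ x, ((P.rnDeriv Q x).toReal * f x - exp (f x) + 1) ∂Q := by
  have hf : Integrable (fun x => (P.rnDeriv Q x).toReal * f x) Q :=
    (integrable_rnDeriv_smul_iff hPQ).2 hfP
  have hf' : Integrable (fun x => (P.rnDeriv Q x).toReal * f x - exp (f x)) Q := hf.sub hfQ
  rw [donskerVaradhan, integral_add hf' (integrable_const 1), integral_sub hf hfQ,
    ← integral_rnDeriv_smul hPQ (f := f)]
  simp

lemma ofReal_donskerVaradhan_le_klDiv [IsFiniteMeasure P] {f : X → ℝ} (hfP : Integrable f P)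
    (hfQ : Integrable (fun x => exp (f x)) Q) :
    ENNReal.ofReal (donskerVaradhan P Q f) ≤ InformationTheory.klDiv P Q := by
  by_cases hPQ : P ≪ Q
  swap; · simp [hPQ]
  rw [InformationTheory.klDiv_eq_lintegral_klFun_of_ac hPQ,
    donskerVaradhan_eq_integral hPQ hfP hfQ]
  exact (ofReal_integral_le_lintegral_ofReal _ _).trans (lintegral_mono fun x =>
    ENNReal.ofReal_le_ofReal (mul_sub_exp_add_one_le_klFun ENNReal.toReal_nonneg _))

lemma klDiv_le_liminf_donskerVaradhan_truncLog [IsFiniteMeasure P] (hPQ : P ≪ Q) :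
    InformationTheory.klDiv P Q ≤ atTop.liminf fun n : ℕ =>
      ENNReal.ofReal (donskerVaradhan P Q fun x => truncLog n (P.rnDeriv Q x).toReal) := by
  have hg (n : ℕ) : Measurable fun x => truncLog n (P.rnDeriv Q x).toReal :=
    (continuous_truncLog n).measurable.comp (Measure.measurable_rnDeriv P Q).ennreal_toReal
  have hdv (n : ℕ) :
      ENNReal.ofReal (donskerVaradhan P Q fun x => truncLog n (P.rnDeriv Q x).toReal) =
        ∫⁻ x, ENNReal.ofReal ((P.rnDeriv Q x).toReal * truncLog n (P.rnDeriv Q x).toReal -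
          exp (truncLog n (P.rnDeriv Q x).toReal) + 1) ∂Q := by
    have hgP := integrable_of_abs_le (hg n) (fun x => abs_truncLog_le n _) P
    have hgQ := integrable_exp_of_abs_le (hg n) (fun x => abs_truncLog_le n _) Q
    rw [donskerVaradhan_eq_integral hPQ hgP hgQ, ofReal_integral_eq_lintegral_ofReal]
    · exact (((integrable_rnDeriv_smul_iff hPQ).2 hgP).sub hgQ).add (integrable_const 1)
    · exact ae_of_all _ fun x => mul_truncLog_sub_exp_add_one_nonneg n _
  simp_rw [hdv, InformationTheory.klDiv_eq_lintegral_klFun_of_ac hPQ]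
  refine (lintegral_congr fun x => ?_).trans_le (lintegral_liminf_le fun n => by fun_prop)
  exact (((ENNReal.continuous_ofReal.tendsto _).comp
    (tendsto_mul_truncLog_sub_exp_add_one ENNReal.toReal_nonneg)).liminf_eq).symm

lemma donskerVaradhan_indicator {s : Set X} (hs : MeasurableSet s) (hQs : Q s = 0) (m : ℝ) :
    donskerVaradhan P Q (s.indicator fun _ => m) = m * P.real s := by
  have hexp : (fun x => exp (s.indicator (fun _ => m) x)) =ᵐ[Q] fun _ => 1 := by
    filter_upwards [measure_eq_zero_iff_ae_notMem.1 hQs] with x hx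
    simp [hx]
  rw [donskerVaradhan, integral_congr_ae hexp, integral_indicator_const _ hs]
  simp [mul_comm]

lemma exists_lt_donskerVaradhan [IsFiniteMeasure P] {c : ℝ≥0∞}
    (hc : c < InformationTheory.klDiv P Q) :
    ∃ g : X → ℝ, Measurable g ∧ (∃ C, ∀ x, |g x| ≤ C) ∧
      c < ENNReal.ofReal (donskerVaradhan P Q g) := by
  by_cases hPQ : P ≪ Q
  · obtain ⟨n, hn⟩ := (eventually_lt_of_lt_liminf
      (hc.trans_le (klDiv_le_liminf_donskerVaradhan_truncLog hPQ))).exists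
    exact ⟨_, (continuous_truncLog n).measurable.comp
      (Measure.measurable_rnDeriv P Q).ennreal_toReal, ⟨n, fun x => abs_truncLog_le n _⟩, hn⟩
  · obtain ⟨s, hs, hQs, hPs⟩ : ∃ s, MeasurableSet s ∧ Q s = 0 ∧ P s ≠ 0 := by
      by_contra! h
      exact hPQ (Measure.AbsolutelyContinuous.mk h)
    have hPs' : 0 < P.real s := ENNReal.toReal_pos hPs (measure_ne_top P s)
    set m := (c.toReal + 1) / P.real s
    refine ⟨s.indicator fun _ => m, measurable_const.indicator hs, ⟨|m|, fun x => ?_⟩, ?_⟩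
    · by_cases hx : x ∈ s <;> simp [hx]
    · rw [donskerVaradhan_indicator hs hQs, div_mul_cancel₀ _ hPs'.ne',
        ENNReal.lt_ofReal_iff_toReal_lt (hc.trans_le le_top).ne]
      linarith

lemma donskerVaradhan_sub_le [IsFiniteMeasure P] {f g : X → ℝ} {C : ℝ} (hf : Measurable f)
    (hfC : ∀ x, |f x| ≤ C) (hg : Measurable g) (hgC : ∀ x, |g x| ≤ C) :
    donskerVaradhan P Q g - donskerVaradhan P Q f ≤
      (1 + exp C) * ∫ x, |g x - f x| ∂(P + Q) := by
  have hd (μ : Measure X) [IsFiniteMeasure μ] : Integrable (fun x => |g x - f x|) μ :=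
    ((integrable_of_abs_le hg hgC μ).sub (integrable_of_abs_le hf hfC μ)).abs
  have hP : ∫ x, g x ∂P - ∫ x, f x ∂P ≤ ∫ x, |g x - f x| ∂P := by
    rw [← integral_sub (integrable_of_abs_le hg hgC P) (integrable_of_abs_le hf hfC P)]
    exact integral_mono (((integrable_of_abs_le hg hgC P).sub (integrable_of_abs_le hf hfC P)))
      (hd P) fun x => le_abs_self _
  have hQ : ∫ x, exp (f x) ∂Q - ∫ x, exp (g x) ∂Q ≤ exp C * ∫ x, |g x - f x| ∂Q := by
    rw [← integral_sub (integrable_exp_of_abs_le hf hfC Q) (integrable_exp_of_abs_le hg hgC Q),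
      ← integral_const_mul]
    refine integral_mono ((integrable_exp_of_abs_le hf hfC Q).sub
      (integrable_exp_of_abs_le hg hgC Q)) ((hd Q).const_mul _) fun x => ?_
    rw [abs_sub_comm]
    exact exp_sub_exp_le_mul_abs ((le_abs_self _).trans (hfC x))
  have hP₀ : 0 ≤ ∫ x, |g x - f x| ∂P := integral_nonneg fun _ => abs_nonneg _
  have hQ₀ : 0 ≤ ∫ x, |g x - f x| ∂Q := integral_nonneg fun _ => abs_nonneg _
  rw [integral_add_measure (hd P) (hd Q)]
  unfold donskerVaradhan
  nlinarith [mul_nonneg (exp_pos C).le hP₀]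

end DonskerVaradhan

section Approximation

variable {X : Type*} [PseudoMetricSpace X] [MeasurableSpace X] [BorelSpace X]
  {P Q : Measure X} [IsFiniteMeasure P] [IsProbabilityMeasure Q]

lemma exists_boundedContinuous_lt_donskerVaradhan {g : X → ℝ} {C : ℝ} (hg : Measurable g)
    (hgC : ∀ x, |g x| ≤ C) {a : ℝ} (ha : a < donskerVaradhan P Q g) :
    ∃ f : X →ᵇ ℝ, a < donskerVaradhan P Q f := by
  set K := |C|
  have hgK (x : X) : |g x| ≤ K := (hgC x).trans (le_abs_self C)
  obtain ⟨δ, hδ, hKδ⟩ := exists_pos_mul_lt (sub_pos.2 ha) (1 + exp K)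
  obtain ⟨h, hgh, -⟩ :=
    (integrable_of_abs_le hg hgK (P + Q)).exists_boundedContinuous_integral_sub_le hδ
  have hclamp : LipschitzWith 1 fun t : ℝ => max (min t K) (-K) :=
    (LipschitzWith.id.min_const K).max_const (-K)
  let f : X →ᵇ ℝ := h.comp _ hclamp
  have hfK (x : X) : |f x| ≤ K :=
    abs_le.2 ⟨le_max_right _ _, max_le (min_le_right _ _) (neg_le_self (abs_nonneg C))⟩
  have hfg (x : X) : |g x - f x| ≤ ‖g x - h x‖ := by
    have hgx : max (min (g x) K) (-K) = g x := by
      rw [min_eq_left (abs_le.1 (hgK x)).2, max_eq_left (abs_le.1 (hgK x)).1]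
    have := hclamp.dist_le_mul (g x) (h x)
    rwa [Real.dist_eq, Real.dist_eq, hgx, NNReal.coe_one, one_mul, ← Real.norm_eq_abs] at this
  have hint : ∫ x, |g x - f x| ∂(P + Q) ≤ δ := by
    refine (integral_mono ?_ ?_ hfg).trans hgh
    · exact ((integrable_of_abs_le hg hgK _).sub (f.integrable _)).abs
    · exact ((integrable_of_abs_le hg hgK _).sub (h.integrable _)).norm
  refine ⟨f, ?_⟩
  have hsub := donskerVaradhan_sub_le (P := P) (Q := Q) f.continuous.measurable hfK hg hgK
  nlinarith [mul_le_mul_of_nonneg_left hint (by positivity : (0 : ℝ) ≤ 1 + exp K)]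

variable (P Q)

theorem klDiv_eq_iSup_donskerVaradhan :
    InformationTheory.klDiv P Q = ⨆ f : X →ᵇ ℝ, ENNReal.ofReal (donskerVaradhan P Q f) := by
  refine le_antisymm (le_of_forall_lt fun c hc => ?_) (iSup_le fun f =>
    ofReal_donskerVaradhan_le_klDiv (f.integrable P)
      (integrable_exp_of_abs_le f.continuous.measurable f.norm_coe_le_norm Q))
  obtain ⟨g, hg, ⟨C, hgC⟩, hcg⟩ := exists_lt_donskerVaradhan hc
  have hc_top : c ≠ ⊤ := (hc.trans_le le_top).ne
  obtain ⟨f, hf⟩ := exists_boundedContinuous_lt_donskerVaradhan hg hgC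
    ((ENNReal.lt_ofReal_iff_toReal_lt hc_top).1 hcg)
  exact ((ENNReal.lt_ofReal_iff_toReal_lt hc_top).2 hf).trans_le (le_iSup_of_le f le_rfl)

end Approximation

theorem lowerSemicontinuous_klDiv {X : Type*} [PseudoMetricSpace X] [MeasurableSpace X]
    [BorelSpace X] (Q : Measure X) [IsProbabilityMeasure Q] :
    LowerSemicontinuous fun P : ProbabilityMeasure X => InformationTheory.klDiv P Q := by
  simp_rw [klDiv_eq_iSup_donskerVaradhan]
  refine lowerSemicontinuous_iSup fun f => Continuous.lowerSemicontinuous ?_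
  exact ENNReal.continuous_ofReal.comp
    (((ProbabilityMeasure.continuous_integral_boundedContinuousFunction f).sub
      continuous_const).add continuous_const)

theorem stmt7_general {X : Type*} [MetricSpace X]
    [MeasurableSpace X] [BorelSpace X]
    (P₁ : ProbabilityMeasure X) :
    ∀ (Ps : ℕ → ProbabilityMeasure X) (P₀ : ProbabilityMeasure X),
      Tendsto Ps atTop (𝓝 P₀) →
      klDiv (P₀ : Measure X) (P₁ : Measure X)
        ≤ Filter.atTop.liminf (fun s => klDiv (Ps s : Measure X) (P₁ : Measure X)) := by
  intro Ps P₀ hPs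
  simp only [klDiv_eq_informationTheory_klDiv]
  exact ((lowerSemicontinuous_klDiv (P₁ : Measure X)).le_liminf P₀).trans
    hPs.liminf_le_liminf_comp

/-- On a compact metric space, `P ↦ D(P‖P₁)` is sequentially lower semicontinuous with
respect to the topology of weak convergence of probability measures. -/
theorem stmt7 {X : Type*} [MetricSpace X] [CompactSpace X]
    [MeasurableSpace X] [BorelSpace X]
    (P₁ : ProbabilityMeasure X) :
    ∀ (Ps : ℕ → ProbabilityMeasure X) (P₀ : ProbabilityMeasure X),
      Tendsto Ps atTop (𝓝 P₀) →
      klDiv (P₀ : Measure X) (P₁ : Measure X)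
        ≤ Filter.atTop.liminf (fun s => klDiv (Ps s : Measure X) (P₁ : Measure X)) :=
  stmt7_general P₁
end

section
/- Let X be a measurable space and let P₀, P₁ be probability measures on X. Then the infimum, over all randomized tests φ : X → [0,1], of the Bayesian error probability (1/2)∫ φ dP₀ + (1/2)∫ (1−φ) dP₁ equals (1/2)·(P₀ ⊓ P₁)(X); equivalently, the likelihood ratio test is optimal and the optimal Bayesian error probability is half the integral of the pointwise minimum of the densities of P₀ and P₁ with respect to any common dominating σ-finite measure. -/
/-!
If `s` is a Hahn decomposition set for `(P₀, P₁)` (so `P₀ ≤ P₁` on `s` and `P₁ ≤ P₀` off `s`),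
then `P₀ ⊓ P₁` is `P₀` on `s` plus `P₁` off `s`, so the likelihood ratio test `1_s` has error
exactly `(P₀ ⊓ P₁)(X) / 2`. Conversely, for any test `φ`, integrating `φ` and `1 - φ` against
the smaller measure `P₀ ⊓ P₁` bounds the error from below by the same quantity.
-/

open MeasureTheory

namespace MeasureTheory

variable {X : Type*} [MeasurableSpace X] {μ ν : Measure X}

theorem IsHahnDecomposition.inf_eq {s : Set X} (h : IsHahnDecomposition μ ν s) :
    μ ⊓ ν = μ.restrict s + ν.restrict sᶜ := by
  have hs := h.measurableSet
  refine le_antisymm ?_ (le_inf ?_ ?_)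
  · calc μ ⊓ ν = (μ ⊓ ν).restrict s + (μ ⊓ ν).restrict sᶜ :=
          (Measure.restrict_add_restrict_compl hs).symm
      _ ≤ μ.restrict s + ν.restrict sᶜ :=
          add_le_add (Measure.restrict_mono le_rfl inf_le_left)
            (Measure.restrict_mono le_rfl inf_le_right)
  · calc μ.restrict s + ν.restrict sᶜ ≤ μ.restrict s + μ.restrict sᶜ :=
          add_le_add le_rfl h.ge_on_compl
      _ = μ := Measure.restrict_add_restrict_compl hs
  · calc μ.restrict s + ν.restrict sᶜ ≤ ν.restrict s + ν.restrict sᶜ :=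
          add_le_add h.le_on le_rfl
      _ = ν := Measure.restrict_add_restrict_compl hs

theorem IsHahnDecomposition.inf_apply_univ {s : Set X} (h : IsHahnDecomposition μ ν s) :
    (μ ⊓ ν) Set.univ = μ s + ν sᶜ := by
  simp [h.inf_eq]

theorem _root_.Measurable.integrable_of_mem_unitInterval [IsFiniteMeasure μ] {φ : X → ℝ}
    (hφ : Measurable φ) (hφ01 : ∀ x, 0 ≤ φ x ∧ φ x ≤ 1) : Integrable φ μ :=
  .of_bound hφ.aestronglyMeasurable 1 <| .of_forall fun x ↦ by
    rw [Real.norm_of_nonneg (hφ01 x).1]; exact (hφ01 x).2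

theorem inf_real_univ_le_integral_add_integral_one_sub [IsFiniteMeasure μ] [IsFiniteMeasure ν]
    {φ : X → ℝ} (hφ : Measurable φ) (hφ01 : ∀ x, 0 ≤ φ x ∧ φ x ≤ 1) :
    ((μ ⊓ ν) Set.univ).toReal ≤ ∫ x, φ x ∂μ + ∫ x, (1 - φ x) ∂ν := by
  have : IsFiniteMeasure (μ ⊓ ν) := isFiniteMeasure_of_le μ inf_le_left
  have h1φ : ∀ x, 0 ≤ 1 - φ x ∧ 1 - φ x ≤ 1 := fun x ↦
    ⟨sub_nonneg.2 (hφ01 x).2, sub_le_self _ (hφ01 x).1⟩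
  have h1φm : Measurable fun x ↦ 1 - φ x := measurable_const.sub hφ
  calc ((μ ⊓ ν) Set.univ).toReal = ∫ x, φ x ∂(μ ⊓ ν) + ∫ x, (1 - φ x) ∂(μ ⊓ ν) := by
        rw [← integral_add (hφ.integrable_of_mem_unitInterval hφ01)
          (h1φm.integrable_of_mem_unitInterval h1φ)]
        simp [Measure.real]
    _ ≤ ∫ x, φ x ∂μ + ∫ x, (1 - φ x) ∂ν :=
        add_le_add
          (integral_mono_measure inf_le_left (.of_forall fun x ↦ (hφ01 x).1)
            (hφ.integrable_of_mem_unitInterval hφ01))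
          (integral_mono_measure inf_le_right (.of_forall fun x ↦ (h1φ x).1)
            (h1φm.integrable_of_mem_unitInterval h1φ))

theorem IsHahnDecomposition.integral_indicator_add_integral_one_sub_indicator
    [IsFiniteMeasure μ] [IsFiniteMeasure ν] {s : Set X} (h : IsHahnDecomposition μ ν s) :
    ∫ x, s.indicator 1 x ∂μ + ∫ x, (1 - s.indicator 1 x) ∂ν = ((μ ⊓ ν) Set.univ).toReal := by
  have hs := h.measurableSet
  have hcompl : (fun x ↦ 1 - s.indicator (1 : X → ℝ) x) = sᶜ.indicator 1 := by
    funext x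
    by_cases hx : x ∈ s <;> simp [hx]
  rw [hcompl, integral_indicator_one hs, integral_indicator_one hs.compl, h.inf_apply_univ,
    ENNReal.toReal_add (measure_ne_top _ _) (measure_ne_top _ _), measureReal_def, measureReal_def]

end MeasureTheory

/-- The optimal Bayesian error probability over randomized tests equals half the total
mass of the lattice infimum of the two hypothesis distributions. -/
theorem stmt9 {X : Type*} [MeasurableSpace X] (P₀ P₁ : Measure X)
    [IsProbabilityMeasure P₀] [IsProbabilityMeasure P₁] :
    (⨅ φ : {φ : X → ℝ // Measurable φ ∧ ∀ x, 0 ≤ φ x ∧ φ x ≤ 1},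
        (1 / 2) * ∫ x, (φ : X → ℝ) x ∂P₀ + (1 / 2) * ∫ x, (1 - (φ : X → ℝ) x) ∂P₁)
      = (1 / 2) * ((P₀ ⊓ P₁) Set.univ).toReal := by
  have risk_ge : ∀ φ : {φ : X → ℝ // Measurable φ ∧ ∀ x, 0 ≤ φ x ∧ φ x ≤ 1},
      (1 / 2) * ((P₀ ⊓ P₁) Set.univ).toReal ≤
        (1 / 2) * ∫ x, (φ : X → ℝ) x ∂P₀ + (1 / 2) * ∫ x, (1 - (φ : X → ℝ) x) ∂P₁ := by
    rintro ⟨φ, hφ, hφ01⟩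
    rw [← mul_add]
    exact mul_le_mul_of_nonneg_left
      (inf_real_univ_le_integral_add_integral_one_sub hφ hφ01) (by norm_num)
  obtain ⟨s, hs⟩ := exists_isHahnDecomposition P₀ P₁
  let likelihoodRatioTest : {φ : X → ℝ // Measurable φ ∧ ∀ x, 0 ≤ φ x ∧ φ x ≤ 1} :=
    ⟨s.indicator 1, measurable_const.indicator hs.measurableSet,
      fun x ↦ by by_cases hx : x ∈ s <;> simp [hx]⟩
  have : Nonempty {φ : X → ℝ // Measurable φ ∧ ∀ x, 0 ≤ φ x ∧ φ x ≤ 1} := ⟨likelihoodRatioTest⟩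
  refine le_antisymm (ciInf_le_of_le ⟨_, Set.forall_mem_range.2 risk_ge⟩
    likelihoodRatioTest (le_of_eq ?_)) (le_ciInf risk_ge)
  rw [← mul_add, hs.integral_indicator_add_integral_one_sub_indicator]
end

section
/- Let μ be a σ-finite measure on a measurable space X and let P₀ and P₁ be probability measures on X with densities p₀ and p₁ with respect to μ. Then ∫ min{p₀, p₁} dμ equals the infimum, over all finite measurable partitions {A₁,…,A_k} of X, of ∑_{i=1}^k min{P₀(A_i), P₁(A_i)}. -/
/-!
For integrable `f, g` and any finite measurable partition `(Aᵢ)`, splitting the integral gives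
`∫ min f g = ∑ᵢ ∫_{Aᵢ} min f g ≤ ∑ᵢ min (∫_{Aᵢ} f) (∫_{Aᵢ} g)`, and the two-set partition
`{f ≤ g}, {f > g}` attains equality. With densities, `Pⱼ(A) = ∫_A pⱼ dμ`.
-/

open MeasureTheory

namespace MeasureTheory

variable {X : Type*} [MeasurableSpace X] {μ : Measure X}

def minPartitionSums (ν₀ ν₁ : Set X → ℝ) : Set ℝ :=
  {r | ∃ (k : ℕ) (A : Fin k → Set X), (∀ i, MeasurableSet (A i)) ∧
    Pairwise (Function.onFun Disjoint A) ∧ (⋃ i, A i) = Set.univ ∧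
    r = ∑ i, min (ν₀ (A i)) (ν₁ (A i))}

theorem minPartitionSums_congr {ν₀ ν₁ ν₀' ν₁' : Set X → ℝ}
    (h₀ : ∀ A, MeasurableSet A → ν₀ A = ν₀' A) (h₁ : ∀ A, MeasurableSet A → ν₁ A = ν₁' A) :
    minPartitionSums ν₀ ν₁ = minPartitionSums ν₀' ν₁' := by
  ext r
  refine exists_congr fun k => exists_congr fun A => and_congr_right fun hA => ?_
  rw [Finset.sum_congr rfl fun i _ => by rw [h₀ _ (hA i), h₁ _ (hA i)]]

theorem min_add_min_compl_mem_minPartitionSums {ν₀ ν₁ : Set X → ℝ} {S : Set X}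
    (hS : MeasurableSet S) :
    min (ν₀ S) (ν₁ S) + min (ν₀ Sᶜ) (ν₁ Sᶜ) ∈ minPartitionSums ν₀ ν₁ := by
  refine ⟨2, ![S, Sᶜ], ?_, ?_, ?_, by simp [Fin.sum_univ_two]⟩
  · simp [Fin.forall_fin_two, hS]
  · intro i j hij
    fin_cases i <;> fin_cases j <;>
      simp_all [Function.onFun, disjoint_compl_right, disjoint_compl_left]
  · simp [Set.eq_univ_iff_forall, Fin.exists_fin_two, em]

variable {f g : X → ℝ}

theorem integral_min_le_sum_min_setIntegral (hf : Integrable f μ) (hg : Integrable g μ)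
    {k : ℕ} {A : Fin k → Set X} (hAm : ∀ i, MeasurableSet (A i))
    (hAd : Pairwise (Function.onFun Disjoint A)) (hAu : (⋃ i, A i) = Set.univ) :
    ∫ x, min (f x) (g x) ∂μ ≤ ∑ i, min (∫ x in A i, f x ∂μ) (∫ x in A i, g x ∂μ) := by
  have hmin : Integrable (fun x => min (f x) (g x)) μ := hf.inf hg
  calc ∫ x, min (f x) (g x) ∂μ = ∑ i, ∫ x in A i, min (f x) (g x) ∂μ := by
        rw [← setIntegral_univ, ← hAu,
          integral_iUnion_fintype hAm hAd fun i => hmin.integrableOn]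
    _ ≤ _ := Finset.sum_le_sum fun i _ => le_min
        (setIntegral_mono hmin.integrableOn hf.integrableOn fun x => min_le_left _ _)
        (setIntegral_mono hmin.integrableOn hg.integrableOn fun x => min_le_right _ _)

theorem setIntegral_min_of_le (hf : Integrable f μ) (hg : Integrable g μ) {A : Set X}
    (hA : MeasurableSet A) (hfg : ∀ x ∈ A, f x ≤ g x) :
    ∫ x in A, min (f x) (g x) ∂μ = min (∫ x in A, f x ∂μ) (∫ x in A, g x ∂μ) := by
  rw [min_eq_left (setIntegral_mono_on hf.integrableOn hg.integrableOn hA hfg)]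
  exact setIntegral_congr_fun hA fun x hx => min_eq_left (hfg x hx)

theorem integral_min_mem_minPartitionSums (hfm : Measurable f) (hgm : Measurable g)
    (hf : Integrable f μ) (hg : Integrable g μ) :
    ∫ x, min (f x) (g x) ∂μ ∈ minPartitionSums (∫ x in ·, f x ∂μ) (∫ x in ·, g x ∂μ) := by
  set S := {x | f x ≤ g x}
  have hmin : Integrable (fun x => min (f x) (g x)) μ := hf.inf hg
  have hS : MeasurableSet S := measurableSet_le hfm hgm
  have hSc : ∫ x in Sᶜ, min (f x) (g x) ∂μ = min (∫ x in Sᶜ, f x ∂μ) (∫ x in Sᶜ, g x ∂μ) := by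
    simp_rw [min_comm (f _), min_comm (∫ x in Sᶜ, f x ∂μ)]
    exact setIntegral_min_of_le hg hf hS.compl fun x (hx : ¬f x ≤ g x) => (not_le.1 hx).le
  rw [← integral_add_compl hS hmin, setIntegral_min_of_le hf hg hS fun x hx => hx, hSc]
  exact min_add_min_compl_mem_minPartitionSums hS

theorem isLeast_integral_min_minPartitionSums (hfm : Measurable f) (hgm : Measurable g)
    (hf : Integrable f μ) (hg : Integrable g μ) :
    IsLeast (minPartitionSums (∫ x in ·, f x ∂μ) (∫ x in ·, g x ∂μ))
      (∫ x, min (f x) (g x) ∂μ) := by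
  refine ⟨integral_min_mem_minPartitionSums hfm hgm hf hg, ?_⟩
  rintro r ⟨k, A, hAm, hAd, hAu, rfl⟩
  exact integral_min_le_sum_min_setIntegral hf hg hAm hAd hAu

theorem integrable_of_isFiniteMeasure_withDensity_ofReal {p : X → ℝ}
    (hpm : AEStronglyMeasurable p μ) (hp : 0 ≤ᵐ[μ] p)
    [IsFiniteMeasure (μ.withDensity fun x => ENNReal.ofReal (p x))] : Integrable p μ := by
  refine ⟨hpm, (hasFiniteIntegral_iff_ofReal hp).2 ?_⟩
  simpa [withDensity_apply] using
    measure_lt_top (μ.withDensity fun x => ENNReal.ofReal (p x)) Set.univ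

theorem toReal_withDensity_ofReal_apply {p : X → ℝ} (hpm : AEStronglyMeasurable p μ)
    (hp : 0 ≤ᵐ[μ] p) {A : Set X} (hA : MeasurableSet A) :
    ((μ.withDensity fun x => ENNReal.ofReal (p x)) A).toReal = ∫ x in A, p x ∂μ := by
  rw [withDensity_apply _ hA,
    integral_eq_lintegral_of_nonneg_ae (ae_restrict_of_ae hp) hpm.restrict]

end MeasureTheory

theorem stmt10_general {X : Type*} [MeasurableSpace X] (μ : Measure X)
    (p₀ p₁ : X → ℝ) (h₀m : Measurable p₀) (h₁m : Measurable p₁)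
    (h₀0 : ∀ x, 0 ≤ p₀ x) (h₁0 : ∀ x, 0 ≤ p₁ x)
    (P₀ P₁ : Measure X)
    (hP₀ : P₀ = μ.withDensity fun x => ENNReal.ofReal (p₀ x))
    (hP₁ : P₁ = μ.withDensity fun x => ENNReal.ofReal (p₁ x))
    [IsProbabilityMeasure P₀] [IsProbabilityMeasure P₁] :
    ∫ x, min (p₀ x) (p₁ x) ∂μ
      = sInf {r : ℝ | ∃ (k : ℕ) (A : Fin k → Set X),
          (∀ i, MeasurableSet (A i)) ∧ Pairwise (Function.onFun Disjoint A) ∧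
          (⋃ i, A i) = Set.univ ∧
          r = ∑ i, min (P₀ (A i)).toReal (P₁ (A i)).toReal} := by
  have : IsFiniteMeasure (μ.withDensity fun x => ENNReal.ofReal (p₀ x)) := hP₀ ▸ inferInstance
  have : IsFiniteMeasure (μ.withDensity fun x => ENNReal.ofReal (p₁ x)) := hP₁ ▸ inferInstance
  have hp₀ : Integrable p₀ μ := integrable_of_isFiniteMeasure_withDensity_ofReal
    h₀m.aestronglyMeasurable (ae_of_all _ h₀0)
  have hp₁ : Integrable p₁ μ := integrable_of_isFiniteMeasure_withDensity_ofReal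
    h₁m.aestronglyMeasurable (ae_of_all _ h₁0)
  have hν₀ (A : Set X) (hA : MeasurableSet A) : ∫ x in A, p₀ x ∂μ = (P₀ A).toReal := by
    rw [hP₀, toReal_withDensity_ofReal_apply h₀m.aestronglyMeasurable (ae_of_all _ h₀0) hA]
  have hν₁ (A : Set X) (hA : MeasurableSet A) : ∫ x in A, p₁ x ∂μ = (P₁ A).toReal := by
    rw [hP₁, toReal_withDensity_ofReal_apply h₁m.aestronglyMeasurable (ae_of_all _ h₁0) hA]
  exact (isLeast_integral_min_minPartitionSums h₀m h₁m hp₀ hp₁).csInf_eq.symm.trans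
    (congrArg sInf (minPartitionSums_congr hν₀ hν₁))

/-- For probability measures `P₀, P₁` with densities `p₀, p₁` w.r.t. a σ-finite measure `μ`,
`∫ min{p₀,p₁} dμ` equals the infimum over finite measurable partitions of
`∑ᵢ min{P₀(Aᵢ), P₁(Aᵢ)}`. -/
theorem stmt10 {X : Type*} [MeasurableSpace X] (μ : Measure X) [SigmaFinite μ]
    (p₀ p₁ : X → ℝ) (h₀m : Measurable p₀) (h₁m : Measurable p₁)
    (h₀0 : ∀ x, 0 ≤ p₀ x) (h₁0 : ∀ x, 0 ≤ p₁ x)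
    (P₀ P₁ : Measure X)
    (hP₀ : P₀ = μ.withDensity fun x => ENNReal.ofReal (p₀ x))
    (hP₁ : P₁ = μ.withDensity fun x => ENNReal.ofReal (p₁ x))
    [IsProbabilityMeasure P₀] [IsProbabilityMeasure P₁] :
    ∫ x, min (p₀ x) (p₁ x) ∂μ
      = sInf {r : ℝ | ∃ (k : ℕ) (A : Fin k → Set X),
          (∀ i, MeasurableSet (A i)) ∧ Pairwise (Function.onFun Disjoint A) ∧
          (⋃ i, A i) = Set.univ ∧
          r = ∑ i, min (P₀ (A i)).toReal (P₁ (A i)).toReal} :=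
  stmt10_general μ p₀ p₁ h₀m h₁m h₀0 h₁0 P₀ P₁ hP₀ hP₁
end

section
/- Let X be a compact metric space and let P₀, P₁ be Borel probability measures on X. Then the infimum, over all finite Borel partitions {A₁,…,A_k} of X such that each A_i is a continuity set for both P₀ and P₁ (i.e., P₀(∂A_i) = 0 and P₁(∂A_i) = 0, where ∂A denotes the topological boundary), of ∑_i min{P₀(A_i), P₁(A_i)}, equals the infimum of ∑_i min{P₀(A_i), P₁(A_i)} over all finite Borel partitions of X. -/
/-!
Approximate each cell `Aᵢ` of a Borel partition, up to `(P₀ + P₁)`-measure `δ`, by an open set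
`Bᵢ` with `(P₀ + P₁)`-null frontier: inside a closed `F ⊆ Aᵢ` of almost full measure, take a
thickening of `F` whose frontier is null (only countably many radii carry frontier mass).
Null-frontier sets form a Boolean algebra, so disjointing `B₁, …, B_k, X` yields a partition into
continuity sets of both measures. Each new cell exceeds the old one by measure at most `δ`, and
the leftover cell lies in `⋃ᵢ Aᵢ \ Bᵢ`, so `∑ᵢ min {P₀, P₁}` grows by at most `2kδ`.
-/

open MeasureTheory Metric Set Filter Topology ENNReal
open scoped Function

section NullFrontier

variable {X : Type*} [TopologicalSpace X] [MeasurableSpace X] {μ : Measure X} {s t : Set X}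

lemma null_frontier_sdiff (hs : μ (frontier s) = 0) (ht : μ (frontier t) = 0) :
    μ (frontier (s \ t)) = 0 := by
  rw [sdiff_eq]
  exact null_frontier_inter hs (by rwa [frontier_compl])

lemma null_frontier_disjointed {ι : Type*} [Preorder ι] [LocallyFiniteOrderBot ι]
    {f : ι → Set X} (h : ∀ i, μ (frontier (f i)) = 0) (i : ι) :
    μ (frontier (disjointed f i)) = 0 :=
  disjointedRec (p := fun s ↦ μ (frontier s) = 0)
    (fun _ j ht ↦ null_frontier_sdiff ht (h j)) (h i)

end NullFrontier

lemma MeasurableSet.exists_isOpen_null_frontier_sdiff_lt {X : Type*} [PseudoMetricSpace X]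
    [MeasurableSpace X] [BorelSpace X] {μ : Measure X} [IsFiniteMeasure μ]
    {A : Set X} (hA : MeasurableSet A) {ε : ℝ≥0∞} (hε : ε ≠ 0) :
    ∃ B, IsOpen B ∧ μ (frontier B) = 0 ∧ μ (A \ B) < ε ∧ μ (B \ A) < ε := by
  obtain ⟨F, hFA, hF, hAF⟩ := hA.exists_isClosed_sdiff_lt (measure_ne_top μ A) hε
  obtain ⟨r, hr0, hr⟩ := exists_null_frontiers_thickening μ F
  have hlim : Tendsto (fun n ↦ μ (thickening (r n) F)) atTop (𝓝 (μ F)) :=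
    (tendsto_measure_thickening_of_isClosed ⟨1, one_pos, measure_ne_top μ _⟩ hF).comp
      (tendsto_nhdsWithin_iff.2 ⟨hr0, .of_forall fun n ↦ (hr n).1⟩)
  obtain ⟨n, hn⟩ :=
    (hlim.eventually_lt_const (ENNReal.lt_add_right (measure_ne_top μ F) hε)).exists
  have hFB : F ⊆ thickening (r n) F := self_subset_thickening (hr n).1 F
  refine ⟨thickening (r n) F, isOpen_thickening, (hr n).2, ?_, ?_⟩
  · exact (measure_mono (sdiff_subset_sdiff_right hFB)).trans_lt hAF
  · exact (measure_mono (sdiff_subset_sdiff_right hFA)).trans_lt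
      (measure_sdiff_lt_of_lt_add hF.nullMeasurableSet hFB (measure_ne_top μ F) hn)

lemma exists_null_frontier_partition_approx {X : Type*} [PseudoMetricSpace X]
    [MeasurableSpace X] [BorelSpace X] (μ : Measure X) [IsFiniteMeasure μ]
    {k : ℕ} {A : Fin k → Set X} (hA : ∀ i, MeasurableSet (A i)) (hcover : ⋃ i, A i = univ)
    {ε : ℝ≥0∞} (hε : ε ≠ 0) :
    ∃ C : Fin (k + 1) → Set X, (∀ i, MeasurableSet (C i)) ∧ Pairwise (Disjoint on C) ∧
      ⋃ i, C i = univ ∧ (∀ i, μ (frontier (C i)) = 0) ∧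
      (∀ i : Fin k, μ (C i.castSucc \ A i) ≤ ε) ∧ μ (C (Fin.last k)) ≤ k * ε := by
  choose B hBo hBf hAB hBA using fun i ↦ (hA i).exists_isOpen_null_frontier_sdiff_lt (μ := μ) hε
  -- The appended `univ` makes the disjointed pieces cover `X`; the last piece misses every `B i`.
  set B' : Fin (k + 1) → Set X := Fin.snoc B univ
  have hB'm : ∀ i, MeasurableSet (B' i) :=
    Fin.forall_fin_succ'.2 ⟨by simpa [B'] using fun i ↦ (hBo i).measurableSet, by simp [B']⟩
  have hB'f : ∀ i, μ (frontier (B' i)) = 0 :=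
    Fin.forall_fin_succ'.2 ⟨by simpa [B'] using hBf, by simp [B']⟩
  refine ⟨disjointed B', fun i ↦ ?_, disjoint_disjointed B', ?_, null_frontier_disjointed hB'f,
    fun i ↦ ?_, ?_⟩
  · exact disjointedRec (fun _ j ht ↦ ht.diff (hB'm j)) (hB'm i)
  · rw [iUnion_disjointed]
    exact eq_univ_of_forall fun x ↦ mem_iUnion.2 ⟨Fin.last k, by simp [B']⟩
  · refine (measure_mono (sdiff_subset_sdiff_left ((disjointed_subset B' _).trans ?_))).trans
      (hBA i).le
    simp [B']
  · have hsub : disjointed B' (Fin.last k) ⊆ ⋃ i, A i \ B i := by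
      intro x hx
      rw [disjointed_eq_inter_compl] at hx
      obtain ⟨i, hi⟩ := mem_iUnion.1 (hcover ▸ mem_univ x)
      refine mem_iUnion.2 ⟨i, hi, fun hxB ↦ ?_⟩
      have := mem_iInter₂.1 hx.2 i.castSucc (Fin.castSucc_lt_last i)
      simp [B', hxB] at this
    calc μ (disjointed B' (Fin.last k)) ≤ μ (⋃ i, A i \ B i) := measure_mono hsub
      _ ≤ ∑ i, μ (A i \ B i) := measure_iUnion_fintype_le _ _
      _ ≤ ∑ _i : Fin k, ε := Finset.sum_le_sum fun i _ ↦ (hAB i).le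
      _ = k * ε := by simp

lemma min_measureReal_le_add_sdiff {X : Type*} [MeasurableSpace X] (P₀ P₁ : Measure X)
    [IsFiniteMeasure P₀] [IsFiniteMeasure P₁] (s t : Set X) :
    min (P₀.real s) (P₁.real s) ≤ min (P₀.real t) (P₁.real t) + (P₀ + P₁).real (s \ t) := by
  have key : ∀ P : Measure X, [IsFiniteMeasure P] → P ≤ P₀ + P₁ →
      P.real s ≤ P.real t + (P₀ + P₁).real (s \ t) := fun P _ hP ↦
    calc P.real s ≤ P.real (t ∪ s \ t) := measureReal_mono (by simp)
      _ ≤ P.real t + P.real (s \ t) := measureReal_union_le _ _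
      _ ≤ P.real t + (P₀ + P₁).real (s \ t) := by
        gcongr
        exact ENNReal.toReal_mono (measure_ne_top _ _) (hP _)
  rw [← min_add_add_right]
  exact min_le_min (key P₀ (Measure.le_add_right le_rfl)) (key P₁ (Measure.le_add_left le_rfl))

lemma exists_null_frontier_partition_sum_min_le {X : Type*} [PseudoMetricSpace X]
    [MeasurableSpace X] [BorelSpace X] (P₀ P₁ : Measure X)
    [IsFiniteMeasure P₀] [IsFiniteMeasure P₁]
    {k : ℕ} {A : Fin k → Set X} (hA : ∀ i, MeasurableSet (A i)) (hcover : ⋃ i, A i = univ)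
    {η : ℝ} (hη : 0 < η) :
    ∃ C : Fin (k + 1) → Set X, (∀ i, MeasurableSet (C i)) ∧ Pairwise (Disjoint on C) ∧
      ⋃ i, C i = univ ∧ (∀ i, P₀ (frontier (C i)) = 0 ∧ P₁ (frontier (C i)) = 0) ∧
      ∑ i, min (P₀ (C i)).toReal (P₁ (C i)).toReal
        ≤ ∑ i, min (P₀ (A i)).toReal (P₁ (A i)).toReal + η := by
  set δ := η / (2 * k + 1)
  have hδ : 0 < δ := by positivity
  obtain ⟨C, hCm, hCd, hCc, hCf, hCA, hClast⟩ := exists_null_frontier_partition_approx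
    (P₀ + P₁) hA hcover (ENNReal.ofReal_pos.2 hδ).ne'
  refine ⟨C, hCm, hCd, hCc, fun i ↦ by simpa using hCf i, ?_⟩
  have hpiece : ∀ i : Fin k, min (P₀.real (C i.castSucc)) (P₁.real (C i.castSucc))
      ≤ min (P₀.real (A i)) (P₁.real (A i)) + δ := fun i ↦
    (min_measureReal_le_add_sdiff P₀ P₁ _ _).trans
      (by gcongr; exact ENNReal.toReal_le_of_le_ofReal hδ.le (hCA i))
  have hlast : min (P₀.real (C (Fin.last k))) (P₁.real (C (Fin.last k))) ≤ k * δ := by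
    have := min_measureReal_le_add_sdiff P₀ P₁ (C (Fin.last k)) ∅
    simp only [measureReal_empty, min_self, zero_add, sdiff_empty] at this
    refine this.trans (ENNReal.toReal_le_of_le_ofReal (by positivity) ?_)
    rwa [ENNReal.ofReal_mul (Nat.cast_nonneg k), ENNReal.ofReal_natCast]
  calc ∑ i, min (P₀.real (C i)) (P₁.real (C i))
      = ∑ i : Fin k, min (P₀.real (C i.castSucc)) (P₁.real (C i.castSucc))
        + min (P₀.real (C (Fin.last k))) (P₁.real (C (Fin.last k))) := Fin.sum_univ_castSucc _
    _ ≤ ∑ i : Fin k, (min (P₀.real (A i)) (P₁.real (A i)) + δ) + k * δ := by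
        gcongr with i
        exact hpiece i
    _ = ∑ i, min (P₀.real (A i)) (P₁.real (A i)) + 2 * k * δ := by
        rw [Finset.sum_add_distrib, Finset.sum_const, Finset.card_univ, Fintype.card_fin,
          nsmul_eq_mul]
        ring
    _ ≤ ∑ i, min (P₀.real (A i)) (P₁.real (A i)) + η := by
        gcongr
        rw [mul_div_assoc', div_le_iff₀ (by positivity)]
        linarith

lemma Real.sInf_eq_of_subset_of_forall_exists_le {S T : Set ℝ} (hST : S ⊆ T) (hS : S.Nonempty)
    (hT : BddBelow T) (h : ∀ t ∈ T, ∀ ε > 0, ∃ s ∈ S, s ≤ t + ε) : sInf S = sInf T :=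
  le_antisymm
    (le_csInf (hS.mono hST) fun t ht ↦ le_of_forall_pos_le_add fun ε hε ↦
      let ⟨_, hs, hst⟩ := h t ht ε hε
      (csInf_le (hT.mono hST) hs).trans hst)
    (csInf_le_csInf hT hS hST)

theorem stmt11_general {X : Type*} [MetricSpace X]
    [MeasurableSpace X] [BorelSpace X]
    (P₀ P₁ : Measure X) [IsProbabilityMeasure P₀] [IsProbabilityMeasure P₁] :
    sInf {r : ℝ | ∃ (k : ℕ) (A : Fin k → Set X),
        (∀ i, MeasurableSet (A i)) ∧ Pairwise (Function.onFun Disjoint A) ∧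
        (⋃ i, A i) = Set.univ ∧
        (∀ i, P₀ (frontier (A i)) = 0 ∧ P₁ (frontier (A i)) = 0) ∧
        r = ∑ i, min (P₀ (A i)).toReal (P₁ (A i)).toReal}
      = sInf {r : ℝ | ∃ (k : ℕ) (A : Fin k → Set X),
          (∀ i, MeasurableSet (A i)) ∧ Pairwise (Function.onFun Disjoint A) ∧
          (⋃ i, A i) = Set.univ ∧
          r = ∑ i, min (P₀ (A i)).toReal (P₁ (A i)).toReal} := by
  refine Real.sInf_eq_of_subset_of_forall_exists_le ?_ ?_ ⟨0, ?_⟩ ?_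
  · rintro r ⟨k, A, hA, hAd, hAc, -, rfl⟩
    exact ⟨k, A, hA, hAd, hAc, rfl⟩
  · exact ⟨_, 1, fun _ ↦ univ, fun _ ↦ .univ, Subsingleton.pairwise, iUnion_const _,
      fun _ ↦ by simp, rfl⟩
  · rintro r ⟨k, A, -, -, -, rfl⟩
    positivity
  · rintro r ⟨k, A, hA, -, hAc, rfl⟩ η hη
    obtain ⟨C, hCm, hCd, hCc, hCf, hC⟩ :=
      exists_null_frontier_partition_sum_min_le P₀ P₁ hA hAc hη
    exact ⟨_, ⟨k + 1, C, hCm, hCd, hCc, hCf, rfl⟩, hC⟩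

/-- On a compact metric space, the infimum of `∑ᵢ min{P₀(Aᵢ), P₁(Aᵢ)}` over finite Borel
partitions into continuity sets of both `P₀` and `P₁` equals the infimum over all finite
Borel partitions. -/
theorem stmt11 {X : Type*} [MetricSpace X] [CompactSpace X]
    [MeasurableSpace X] [BorelSpace X]
    (P₀ P₁ : Measure X) [IsProbabilityMeasure P₀] [IsProbabilityMeasure P₁] :
    sInf {r : ℝ | ∃ (k : ℕ) (A : Fin k → Set X),
        (∀ i, MeasurableSet (A i)) ∧ Pairwise (Function.onFun Disjoint A) ∧
        (⋃ i, A i) = Set.univ ∧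
        (∀ i, P₀ (frontier (A i)) = 0 ∧ P₁ (frontier (A i)) = 0) ∧
        r = ∑ i, min (P₀ (A i)).toReal (P₁ (A i)).toReal}
      = sInf {r : ℝ | ∃ (k : ℕ) (A : Fin k → Set X),
          (∀ i, MeasurableSet (A i)) ∧ Pairwise (Function.onFun Disjoint A) ∧
          (⋃ i, A i) = Set.univ ∧
          r = ∑ i, min (P₀ (A i)).toReal (P₁ (A i)).toReal} :=
  stmt11_general P₀ P₁
end

section
/- Let Q₀ and Q₁ be probability measures on X, θ ≥ 0, and let 𝒫₀ and 𝒫₁ be the MMD uncertainty sets of radius θ centered at Q₀ and Q₁ respectively. Then: (i) for every P₀ ∈ 𝒫₀, (inf over P ∈ 𝒫₀ of ‖μ_{P₀} − μ_P‖_H) − (inf over P ∈ 𝒫₁ of ‖μ_{P₀} − μ_P‖_H) ≤ −‖μ_{Q₀} − μ_{Q₁}‖_H + 2θ; and (ii) for every P₁ ∈ 𝒫₁, (inf over P ∈ 𝒫₀ of ‖μ_{P₁} − μ_P‖_H) − (inf over P ∈ 𝒫₁ of ‖μ_{P₁} − μ_P‖_H) ≥ ‖μ_{Q₀} − μ_{Q₁}‖_H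 − 2θ. -/
open MeasureTheory

/-!
Every measure of `𝒫ᵢ` has its embedding within `θ` of `μ_{Qᵢ}`, so by the triangle inequality any
two embeddings taken from `𝒫₀` and `𝒫₁` are at distance at least `‖μ_{Q₀} − μ_{Q₁}‖ − 2θ`.
The infimum over the set a point belongs to is `0`, and the other infimum is bounded below by
this separation.
-/

section Separation

variable {E ι : Type*} [PseudoMetricSpace E]

theorem dist_sub_two_mul_le_dist {a b c d : E} {θ : ℝ} (ha : dist a c ≤ θ) (hb : dist b d ≤ θ) :
    dist c d - 2 * θ ≤ dist a b := by
  have hcd : dist c d ≤ dist c a + dist a b + dist b d := dist_triangle4 c a b d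
  rw [dist_comm c a] at hcd
  linarith

theorem iInf_dist_le_zero_of_eq (m : ι → E) {a : E} {i : ι} (hi : m i = a) :
    ⨅ j, dist a (m j) ≤ 0 :=
  ciInf_le_of_le ⟨0, Set.forall_mem_range.2 fun _ => dist_nonneg⟩ i (by simp [hi])

theorem sub_two_mul_le_iInf_dist [Nonempty ι] (m : ι → E) {a c d : E} {θ : ℝ}
    (ha : dist a c ≤ θ) (hm : ∀ j, dist (m j) d ≤ θ) :
    dist c d - 2 * θ ≤ ⨅ j, dist a (m j) :=
  le_ciInf fun j => dist_sub_two_mul_le_dist ha (hm j)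

end Separation

theorem stmt13_general
    {X H : Type*} [MeasurableSpace X]
    [NormedAddCommGroup H] [InnerProductSpace ℝ H]
    (Φ : X → H)
    (Q₀ Q₁ : Measure X) [IsProbabilityMeasure Q₀] [IsProbabilityMeasure Q₁]
    (θ : ℝ) (hθ : 0 ≤ θ) :
    let μemb : Measure X → H := fun P => ∫ x, Φ x ∂P
    let 𝒫₀ : Set (Measure X) := {P | IsProbabilityMeasure P ∧ ‖μemb P - μemb Q₀‖ ≤ θ}
    let 𝒫₁ : Set (Measure X) := {P | IsProbabilityMeasure P ∧ ‖μemb P - μemb Q₁‖ ≤ θ}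
    (∀ P₀ ∈ 𝒫₀,
      (⨅ P : ↥𝒫₀, ‖μemb P₀ - μemb (P : Measure X)‖)
          - (⨅ P : ↥𝒫₁, ‖μemb P₀ - μemb (P : Measure X)‖)
        ≤ -‖μemb Q₀ - μemb Q₁‖ + 2 * θ) ∧
    (∀ P₁ ∈ 𝒫₁,
      ‖μemb Q₀ - μemb Q₁‖ - 2 * θ
        ≤ (⨅ P : ↥𝒫₀, ‖μemb P₁ - μemb (P : Measure X)‖)
            - (⨅ P : ↥𝒫₁, ‖μemb P₁ - μemb (P : Measure X)‖)) := by
  intro μemb 𝒫₀ 𝒫₁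
  have : Nonempty 𝒫₀ := ⟨⟨Q₀, inferInstance, by simpa using hθ⟩⟩
  have : Nonempty 𝒫₁ := ⟨⟨Q₁, inferInstance, by simpa using hθ⟩⟩
  simp only [← dist_eq_norm]
  constructor
  · intro P₀ hP₀
    have h₀ := iInf_dist_le_zero_of_eq (fun P : 𝒫₀ => μemb P) (i := ⟨P₀, hP₀⟩) rfl
    have h₁ := sub_two_mul_le_iInf_dist (fun P : 𝒫₁ => μemb P) ((dist_eq_norm _ _).trans_le hP₀.2)
      fun P => (dist_eq_norm _ _).trans_le P.2.2
    linarith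
  · intro P₁ hP₁
    have h₀ := sub_two_mul_le_iInf_dist (fun P : 𝒫₀ => μemb P) ((dist_eq_norm _ _).trans_le hP₁.2)
      fun P => (dist_eq_norm _ _).trans_le P.2.2
    have h₁ := iInf_dist_le_zero_of_eq (fun P : 𝒫₁ => μemb P) (i := ⟨P₁, hP₁⟩) rfl
    rw [dist_comm (μemb Q₁)] at h₀
    linarith

/-- Bounds on the direct robust kernel test statistic under the two hypotheses:
for `P₀ ∈ 𝒫₀` the statistic is at most `−‖μ_{Q₀}−μ_{Q₁}‖ + 2θ`, and for `P₁ ∈ 𝒫₁` it is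
at least `‖μ_{Q₀}−μ_{Q₁}‖ − 2θ`. -/
theorem stmt13
    {X H : Type*} [MeasurableSpace X]
    [NormedAddCommGroup H] [InnerProductSpace ℝ H] [CompleteSpace H]
    (Φ : X → H) (hΦm : StronglyMeasurable Φ) (C : ℝ) (hΦb : ∀ x, ‖Φ x‖ ≤ C)
    (Q₀ Q₁ : Measure X) [IsProbabilityMeasure Q₀] [IsProbabilityMeasure Q₁]
    (θ : ℝ) (hθ : 0 ≤ θ) :
    let μemb : Measure X → H := fun P => ∫ x, Φ x ∂P
    let 𝒫₀ : Set (Measure X) := {P | IsProbabilityMeasure P ∧ ‖μemb P - μemb Q₀‖ ≤ θ}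
    let 𝒫₁ : Set (Measure X) := {P | IsProbabilityMeasure P ∧ ‖μemb P - μemb Q₁‖ ≤ θ}
    (∀ P₀ ∈ 𝒫₀,
      (⨅ P : ↥𝒫₀, ‖μemb P₀ - μemb (P : Measure X)‖)
          - (⨅ P : ↥𝒫₁, ‖μemb P₀ - μemb (P : Measure X)‖)
        ≤ -‖μemb Q₀ - μemb Q₁‖ + 2 * θ) ∧
    (∀ P₁ ∈ 𝒫₁,
      ‖μemb Q₀ - μemb Q₁‖ - 2 * θ
        ≤ (⨅ P : ↥𝒫₀, ‖μemb P₁ - μemb (P : Measure X)‖)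
            - (⨅ P : ↥𝒫₁, ‖μemb P₁ - μemb (P : Measure X)‖)) :=
  stmt13_general Φ Q₀ Q₁ θ hθ
end

section
/- Let Q₀ and Q₁ be probability measures on X. Define g : [0,∞) → ℝ by g(θ) = sup of (P₀ ⊓ P₁)(X) over all pairs of probability measures (P₀, P₁) on X with ‖μ_{P₀} − μ_{Q₀}‖_H ≤ θ and ‖μ_{P₁} − μ_{Q₁}‖_H ≤ θ. Then g is concave on [0,∞): for all θ₁, θ₂ ≥ 0 and λ ∈ [0,1], g(λθ₁ + (1−λ)θ₂) ≥ λ·g(θ₁) + (1−λ)·g(θ₂); consequently g is continuous on (0,∞). -/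
open MeasureTheory
open scoped ENNReal

/-- The optimal worst-case affinity `g(θ) = sup{(P₀ ⊓ P₁)(X) : ‖μ_{P₀}−μ_{Q₀}‖ ≤ θ,
‖μ_{P₁}−μ_{Q₁}‖ ≤ θ}` is concave on `[0,∞)` and hence continuous on `(0,∞)`. -/
theorem stmt18
    {X H : Type*} [MeasurableSpace X]
    [NormedAddCommGroup H] [InnerProductSpace ℝ H] [CompleteSpace H]
    (Φ : X → H) (hΦm : StronglyMeasurable Φ) (C : ℝ) (hΦb : ∀ x, ‖Φ x‖ ≤ C)
    (Q₀ Q₁ : Measure X) [IsProbabilityMeasure Q₀] [IsProbabilityMeasure Q₁] :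
    let μemb : Measure X → H := fun P => ∫ x, Φ x ∂P
    let g : ℝ → ℝ := fun θ =>
      sSup {r : ℝ | ∃ P₀ P₁ : Measure X,
        IsProbabilityMeasure P₀ ∧ IsProbabilityMeasure P₁ ∧
        ‖μemb P₀ - μemb Q₀‖ ≤ θ ∧ ‖μemb P₁ - μemb Q₁‖ ≤ θ ∧
        r = ((P₀ ⊓ P₁) Set.univ).toReal}
    (∀ θ₁ θ₂ : ℝ, 0 ≤ θ₁ → 0 ≤ θ₂ → ∀ lam : ℝ, 0 ≤ lam → lam ≤ 1 →
        lam * g θ₁ + (1 - lam) * g θ₂ ≤ g (lam * θ₁ + (1 - lam) * θ₂)) ∧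
      ContinuousOn g (Set.Ioi (0 : ℝ)) := by
  intro μemb g
  -- integrability of Φ under any finite measure
  have hInt : ∀ (P : Measure X), IsFiniteMeasure P → Integrable Φ P := by
    intro P hP
    exact Integrable.mono' (integrable_const C) hΦm.aestronglyMeasurable
      (Filter.Eventually.of_forall hΦb)
  set S : ℝ → Set ℝ := fun θ => {r : ℝ | ∃ P₀ P₁ : Measure X,
        IsProbabilityMeasure P₀ ∧ IsProbabilityMeasure P₁ ∧
        ‖μemb P₀ - μemb Q₀‖ ≤ θ ∧ ‖μemb P₁ - μemb Q₁‖ ≤ θ ∧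
        r = ((P₀ ⊓ P₁) Set.univ).toReal} with hS
  have hgdef : ∀ θ, g θ = sSup (S θ) := fun θ => rfl
  have hSne : ∀ θ : ℝ, 0 ≤ θ → (S θ).Nonempty := by
    intro θ hθ
    exact ⟨((Q₀ ⊓ Q₁) Set.univ).toReal, Q₀, Q₁, inferInstance, inferInstance,
      by simp [hθ], by simp [hθ], rfl⟩
  have hSbdd : ∀ θ : ℝ, BddAbove (S θ) := by
    intro θ
    refine ⟨1, fun r hr => ?_⟩
    obtain ⟨P₀, P₁, h₀, h₁, -, -, rfl⟩ := hr
    calc ((P₀ ⊓ P₁) Set.univ).toReal ≤ (P₀ Set.univ).toReal := by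
          apply ENNReal.toReal_mono
          · simp [h₀.measure_univ]
          · exact (Measure.le_iff'.mp inf_le_left) Set.univ
      _ = 1 := by simp [h₀.measure_univ]
  have key : ∀ θ₁ θ₂ : ℝ, 0 ≤ θ₁ → 0 ≤ θ₂ → ∀ lam : ℝ, 0 ≤ lam → lam ≤ 1 →
      lam * g θ₁ + (1 - lam) * g θ₂ ≤ g (lam * θ₁ + (1 - lam) * θ₂) := by
    intro θ₁ θ₂ hθ₁ hθ₂ lam hl0 hl1
    have hl1' : (0:ℝ) ≤ 1 - lam := by linarith
    -- mixing lemma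
    have mix : ∀ r₁ ∈ S θ₁, ∀ r₂ ∈ S θ₂,
        lam * r₁ + (1 - lam) * r₂ ≤ sSup (S (lam * θ₁ + (1 - lam) * θ₂)) := by
      rintro r₁ ⟨P₀, P₁, h₀, h₁, hn₀, hn₁, rfl⟩ r₂ ⟨P₀', P₁', h₀', h₁', hn₀', hn₁', rfl⟩
      set a : ℝ≥0∞ := ENNReal.ofReal lam with ha
      set b : ℝ≥0∞ := ENNReal.ofReal (1 - lam) with hb
      have hab : a + b = 1 := by
        rw [ha, hb, ← ENNReal.ofReal_add hl0 hl1']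
        norm_num
      have ha' : a ≠ ⊤ := ENNReal.ofReal_ne_top
      have hb' : b ≠ ⊤ := ENNReal.ofReal_ne_top
      set M₀ : Measure X := a • P₀ + b • P₀' with hM₀
      set M₁ : Measure X := a • P₁ + b • P₁' with hM₁
      have hM₀p : IsProbabilityMeasure M₀ := by
        constructor
        simp [hM₀, h₀.measure_univ, h₀'.measure_univ, hab]
      have hM₁p : IsProbabilityMeasure M₁ := by
        constructor
        simp [hM₁, h₁.measure_univ, h₁'.measure_univ, hab]
      -- embedding of mixtures
      have hemb : ∀ (P P' : Measure X), IsProbabilityMeasure P → IsProbabilityMeasure P' →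
          μemb (a • P + b • P') = lam • μemb P + (1 - lam) • μemb P' := by
        intro P P' hP hP'
        show ∫ x, Φ x ∂(a • P + b • P') = _
        rw [integral_add_measure ((hInt P inferInstance).smul_measure ha')
            ((hInt P' inferInstance).smul_measure hb'),
          integral_smul_measure, integral_smul_measure,
          ENNReal.toReal_ofReal hl0, ENNReal.toReal_ofReal hl1']
      have hnorm : ∀ (P P' Q : Measure X), IsProbabilityMeasure P → IsProbabilityMeasure P' →
          IsProbabilityMeasure Q → ‖μemb P - μemb Q‖ ≤ θ₁ → ‖μemb P' - μemb Q‖ ≤ θ₂ →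
          ‖μemb (a • P + b • P') - μemb Q‖ ≤ lam * θ₁ + (1 - lam) * θ₂ := by
        intro P P' Q hP hP' hQ h1 h2
        rw [hemb P P' hP hP']
        have : lam • μemb P + (1 - lam) • μemb P' - μemb Q
            = lam • (μemb P - μemb Q) + (1 - lam) • (μemb P' - μemb Q) := by
          rw [smul_sub, smul_sub]
          module
        rw [this]
        calc ‖lam • (μemb P - μemb Q) + (1 - lam) • (μemb P' - μemb Q)‖
            ≤ ‖lam • (μemb P - μemb Q)‖ + ‖(1 - lam) • (μemb P' - μemb Q)‖ := norm_add_le _ _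
          _ = lam * ‖μemb P - μemb Q‖ + (1 - lam) * ‖μemb P' - μemb Q‖ := by
              rw [norm_smul, norm_smul, Real.norm_of_nonneg hl0, Real.norm_of_nonneg hl1']
          _ ≤ lam * θ₁ + (1 - lam) * θ₂ := by
              gcongr
      -- superadditivity of inf
      have hsup : a • (P₀ ⊓ P₁) + b • (P₀' ⊓ P₁') ≤ M₀ ⊓ M₁ := by
        refine le_inf ?_ ?_
        · rw [hM₀]
          refine add_le_add ?_ ?_
          · intro s; exact mul_le_mul_right ((Measure.le_iff'.mp inf_le_left) s) a
          · intro s; exact mul_le_mul_right ((Measure.le_iff'.mp inf_le_left) s) b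
        · rw [hM₁]
          refine add_le_add ?_ ?_
          · intro s; exact mul_le_mul_right ((Measure.le_iff'.mp inf_le_right) s) a
          · intro s; exact mul_le_mul_right ((Measure.le_iff'.mp inf_le_right) s) b
      have hfin : (M₀ ⊓ M₁) Set.univ ≠ ⊤ := by
        refine ne_top_of_le_ne_top ?_ ((Measure.le_iff'.mp inf_le_left) Set.univ)
        simp [hM₀p.measure_univ]
      have hval : lam * ((P₀ ⊓ P₁) Set.univ).toReal + (1 - lam) * ((P₀' ⊓ P₁') Set.univ).toReal
          ≤ ((M₀ ⊓ M₁) Set.univ).toReal := by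
        have h1 : (P₀ ⊓ P₁) Set.univ ≠ ⊤ :=
          ne_top_of_le_ne_top (by simp [h₀.measure_univ]) ((Measure.le_iff'.mp inf_le_left) Set.univ)
        have h2 : (P₀' ⊓ P₁') Set.univ ≠ ⊤ :=
          ne_top_of_le_ne_top (by simp [h₀'.measure_univ]) ((Measure.le_iff'.mp inf_le_left) Set.univ)
        have := (Measure.le_iff'.mp hsup) Set.univ
        have heq : ((a • (P₀ ⊓ P₁) + b • (P₀' ⊓ P₁')) Set.univ).toReal
            = lam * ((P₀ ⊓ P₁) Set.univ).toReal + (1 - lam) * ((P₀' ⊓ P₁') Set.univ).toReal := by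
          simp only [Measure.add_apply, Measure.smul_apply, smul_eq_mul]
          rw [ENNReal.toReal_add (ENNReal.mul_ne_top ha' h1) (ENNReal.mul_ne_top hb' h2),
            ENNReal.toReal_mul, ENNReal.toReal_mul, ha, hb,
            ENNReal.toReal_ofReal hl0, ENNReal.toReal_ofReal hl1']
        rw [← heq]
        exact ENNReal.toReal_mono hfin this
      refine hval.trans (le_csSup (hSbdd _) ?_)
      exact ⟨M₀, M₁, hM₀p, hM₁p, hnorm P₀ P₀' Q₀ h₀ h₀' inferInstance hn₀ hn₀',
        hnorm P₁ P₁' Q₁ h₁ h₁' inferInstance hn₁ hn₁', rfl⟩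
    -- epsilon argument
    rw [hgdef, hgdef, hgdef]
    refine le_of_forall_pos_le_add fun ε hε => ?_
    obtain ⟨r₁, hr₁, hr₁'⟩ := exists_lt_of_lt_csSup (hSne θ₁ hθ₁) (by linarith : sSup (S θ₁) - ε < sSup (S θ₁))
    obtain ⟨r₂, hr₂, hr₂'⟩ := exists_lt_of_lt_csSup (hSne θ₂ hθ₂) (by linarith : sSup (S θ₂) - ε < sSup (S θ₂))
    have := mix r₁ hr₁ r₂ hr₂
    nlinarith [mix r₁ hr₁ r₂ hr₂]
  refine ⟨key, ?_⟩
  have hconc : ConcaveOn ℝ (Set.Ioi (0:ℝ)) g := by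
    refine ⟨convex_Ioi 0, fun x hx y hy a b ha hb hab => ?_⟩
    have hb' : b = 1 - a := by linarith
    have := key x y (le_of_lt hx) (le_of_lt hy) a ha (by linarith)
    rw [hb']
    simpa [smul_eq_mul] using this
  exact hconc.continuousOn isOpen_Ioi
end
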